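/- arXiv:2401.15601 — 7 statements merged into one kernel-verified Lean document; each statement's English description precedes it below -/
import Mathlib

section
/- Let (B̃, Λ) be a compatible pair with B̃ᵀ·Λ = [D 0], let r_1,…,r_n be positive integers, k ∈ {1,…,n} and ε ∈ {1,−1}. Let E be the m×m matrix that differs from the identity matrix only in its k-th column, with E_{kk} = −1 and E_{ik} = [−ε·b_{ik}·r_k]_+ for i ≠ k, and let F be the n×n matrix that differs from the identity matrix only in its k-th row, with F_{kk} = −1 and F_{ki} = [ε·r_k·b_{ki}]_+ for i ≠ k, where b_{ij} are the entries of B̃. Set B̃' := E·B̃·F and Λ' := Eᵀ·Λ·E. Then Λ' is skew-symmetric and (B̃')ᵀ·Λ' = [D 0]; that is, the mutation (B̃', Λ') of (B̃, Λ) in direction k is again a compatible pair with the same matrix D. -/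
open Matrix

/-- The mutation of a compatible pair `(B̃, Λ)` in direction `k`
(for either sign `ε`) is again a compatible pair, with the same diagonal matrix `D`:
with `B̃' = E·B̃·F` and `Λ' = Eᵀ·Λ·E`, the matrix `Λ'` is skew-symmetric and
`(B̃')ᵀ·Λ' = [D 0]`. -/
theorem stmt_1 (m n : ℕ) (hn : 1 ≤ n) (hmn : n ≤ m)
    (Bt : Matrix (Fin m) (Fin n) ℤ) (Λ : Matrix (Fin m) (Fin m) ℤ)
    (D : Matrix (Fin n) (Fin n) ℤ)
    (hΛ : Λᵀ = -Λ)
    (hDdiag : ∀ i j, i ≠ j → D i j = 0)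
    (hDpos : ∀ i, 0 < D i i)
    (hcomp : ∀ (i : Fin n) (j : Fin m),
      (Btᵀ * Λ) i j = if h : (j : ℕ) < n then D i ⟨j, h⟩ else 0)
    (r : Fin n → ℤ) (hr : ∀ i, 0 < r i)
    (k : Fin n) (ε : ℤ) (hε : ε = 1 ∨ ε = -1)
    (E : Matrix (Fin m) (Fin m) ℤ)
    (hE : ∀ i j, E i j =
      if j = Fin.castLE hmn k then
        (if i = Fin.castLE hmn k then -1 else max (-(ε * Bt i k * r k)) 0)
      else if i = j then 1 else 0)
    (F : Matrix (Fin n) (Fin n) ℤ)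
    (hF : ∀ i j, F i j =
      if i = k then (if j = k then -1 else max (ε * r k * Bt (Fin.castLE hmn k) j) 0)
      else if i = j then 1 else 0) :
    ((Eᵀ * Λ * E)ᵀ = -(Eᵀ * Λ * E)) ∧
    ∀ (i : Fin n) (j : Fin m),
      ((E * Bt * F)ᵀ * (Eᵀ * Λ * E)) i j = if h : (j : ℕ) < n then D i ⟨j, h⟩ else 0 := by
  constructor
  · simp only [transpose_mul, transpose_transpose, hΛ, Matrix.neg_mul, Matrix.mul_neg,
      Matrix.mul_assoc]
  -- E * E = 1
  have hEE : E * E = 1 := by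
    ext i j
    rw [mul_apply, one_apply]
    by_cases hj : j = Fin.castLE hmn k
    · subst hj
      by_cases hi : i = Fin.castLE hmn k
      · subst hi
        rw [Fintype.sum_eq_single (Fin.castLE hmn k)]
        · simp [hE]
        · intro l hl
          simp only [hE]
          simp [hl, Ne.symm hl]
      · rw [Finset.sum_eq_add_of_mem i (Fin.castLE hmn k) (Finset.mem_univ _)
            (Finset.mem_univ _) hi]
        · simp only [hE]
          simp [hi]
        · intro c _ hc
          simp only [hE]
          simp [hc.1, hc.2, Ne.symm hc.1]
    · rw [Fintype.sum_eq_single j]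
      · simp only [hE]
        simp [hj]
      · intro l hl
        simp only [hE]
        simp [hj, hl]
  have hETET : Eᵀ * Eᵀ = 1 := by rw [← transpose_mul, hEE, transpose_one]
  -- reduce the product
  have hred : (E * Bt * F)ᵀ * (Eᵀ * Λ * E) = Fᵀ * (Btᵀ * Λ) * E := by
    rw [transpose_mul, transpose_mul]
    simp only [Matrix.mul_assoc]
    rw [← Matrix.mul_assoc Eᵀ Eᵀ, hETET, Matrix.one_mul]
  -- ((Btᵀ*Λ) * Bt) i j = D i i * Bt (castLE i) j
  have hPB : ∀ i j : Fin n, ((Btᵀ * Λ) * Bt) i j = D i i * Bt (Fin.castLE hmn i) j := by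
    intro i j
    rw [mul_apply]
    rw [Fintype.sum_eq_single (Fin.castLE hmn i)]
    · rw [hcomp]
      have hval : ((Fin.castLE hmn i : Fin m) : ℕ) < n := i.isLt
      rw [dif_pos hval]
      have hii : (⟨((Fin.castLE hmn i : Fin m) : ℕ), hval⟩ : Fin n) = i := Fin.ext rfl
      rw [hii]
    · intro l hl
      rw [hcomp]
      split
      · rename_i h
        rw [hDdiag]
        · ring
        · intro hli
          exact hl (Fin.ext (by simpa using (congrArg Fin.val hli).symm))
      · ring
  have hPBskew : ∀ i j : Fin n, ((Btᵀ * Λ) * Bt) i j = -(((Btᵀ * Λ) * Bt) j i) := by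
    intro i j
    have h1 : ((Btᵀ * Λ) * Bt)ᵀ = -((Btᵀ * Λ) * Bt) := by
      simp only [transpose_mul, transpose_transpose, hΛ, Matrix.neg_mul, Matrix.mul_neg,
        Matrix.mul_assoc]
    have h2 := congrFun (congrFun h1 j) i
    simp only [transpose_apply, neg_apply] at h2
    rw [h2]
  have hD : ∀ i : Fin n, D i i * Bt (Fin.castLE hmn i) k = -(D k k * Bt (Fin.castLE hmn k) i) := by
    intro i
    rw [← hPB, ← hPB]
    exact hPBskew i k
  refine hred ▸ ?_
  -- entries of M := (Btᵀ*Λ) * E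
  have hM : ∀ (i : Fin n) (j : Fin m), ((Btᵀ * Λ) * E) i j =
      if j = Fin.castLE hmn k then
        (if i = k then -(D k k) else D i i * max (-(ε * Bt (Fin.castLE hmn i) k * r k)) 0)
      else (if h : (j : ℕ) < n then D i ⟨j, h⟩ else 0) := by
    intro i j
    rw [mul_apply]
    by_cases hj : j = Fin.castLE hmn k
    · subst hj
      rw [if_pos rfl]
      rw [Fintype.sum_eq_single (Fin.castLE hmn i)]
      · rw [hcomp, hE]
        have hval : ((Fin.castLE hmn i : Fin m) : ℕ) < n := i.isLt
        rw [dif_pos hval]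
        have hii : (⟨((Fin.castLE hmn i : Fin m) : ℕ), hval⟩ : Fin n) = i := Fin.ext rfl
        rw [hii]
        by_cases hik : i = k
        · rw [hik]
          simp
        · have hcc : ¬ (Fin.castLE hmn i = Fin.castLE hmn k) := by
            simp [Fin.castLE_inj, hik]
          rw [if_pos rfl, if_neg hcc, if_neg hik]
      · intro l hl
        rw [hcomp]
        split
        · rename_i h
          rw [hDdiag]
          · ring
          · intro hli
            exact hl (Fin.ext (by simpa using (congrArg Fin.val hli).symm))
        · ring
    · rw [if_neg hj, Fintype.sum_eq_single j]
      · rw [hE, if_neg hj, if_pos rfl, mul_one, hcomp]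
      · intro l hl
        rw [hE, if_neg hj, if_neg hl, mul_zero]
  intro i j
  rw [Matrix.mul_assoc, mul_apply]
  by_cases hik : i = k
  · rw [hik]
    rw [Fintype.sum_eq_single k]
    · rw [transpose_apply, hF, if_pos rfl, if_pos rfl, hM]
      by_cases hj : j = Fin.castLE hmn k
      · subst hj
        simp only [eq_self_iff_true, if_true]
        have hval : ((Fin.castLE hmn k : Fin m) : ℕ) < n := k.isLt
        rw [dif_pos hval]
        have hkk : (⟨((Fin.castLE hmn k : Fin m) : ℕ), hval⟩ : Fin n) = k := Fin.ext rfl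
        rw [hkk]
        ring
      · rw [if_neg hj]
        by_cases hjn : (j : ℕ) < n
        · rw [dif_pos hjn, hDdiag k ⟨j, hjn⟩]
          · ring
          · intro he
            exact hj (Fin.ext (by simpa using (congrArg Fin.val he).symm))
        · rw [dif_neg hjn]; ring
    · intro l hl
      rw [transpose_apply, hF, if_neg hl, if_neg hl]
      ring
  · rw [Finset.sum_eq_add_of_mem i k (Finset.mem_univ _) (Finset.mem_univ _) hik]
    · rw [transpose_apply, hF, if_neg hik, if_pos rfl, transpose_apply, hF, if_pos rfl,
        if_neg hik, hM, hM]
      by_cases hj : j = Fin.castLE hmn k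
      · subst hj
        simp only [eq_self_iff_true, if_true, if_neg hik]
        have hval : ((Fin.castLE hmn k : Fin m) : ℕ) < n := k.isLt
        rw [dif_pos hval]
        have hkk : (⟨((Fin.castLE hmn k : Fin m) : ℕ), hval⟩ : Fin n) = k := Fin.ext rfl
        rw [hkk, hDdiag i k hik]
        have h1 : D i i * max (-(ε * Bt (Fin.castLE hmn i) k * r k)) 0
            = max (D i i * -(ε * Bt (Fin.castLE hmn i) k * r k)) 0 := by
          rw [mul_max_of_nonneg _ _ (le_of_lt (hDpos i)), mul_zero]
        have h2 : D i i * -(ε * Bt (Fin.castLE hmn i) k * r k)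
            = D k k * (ε * r k * Bt (Fin.castLE hmn k) i) := by
          linear_combination (-(ε * r k)) * hD i
        have h3 : max (D k k * (ε * r k * Bt (Fin.castLE hmn k) i)) 0
            = D k k * max (ε * r k * Bt (Fin.castLE hmn k) i) 0 := by
          rw [mul_max_of_nonneg _ _ (le_of_lt (hDpos k)), mul_zero]
        rw [one_mul, h1, h2, h3]
        ring
      · rw [if_neg hj, if_neg hj]
        by_cases hjn : (j : ℕ) < n
        · simp only [dif_pos hjn]
          rw [hDdiag k ⟨j, hjn⟩]
          · ring
          · intro he
            exact hj (Fin.ext (by simpa using (congrArg Fin.val he).symm))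
        · simp only [dif_neg hjn]; ring
    · intro c _ hc
      rw [transpose_apply, hF, if_neg hc.2, if_neg (fun h => hc.1 (h ▸ rfl) : ¬ c = i)]
      ring
end

section
/- For every 0 ≤ j ≤ K and every 1 ≤ i ≤ n, g̃_{i;j} = (g_{i;j}, 0) ∈ ℤ^{2n}: the first n entries of the extended g-vector g̃_{i;j} form the g-vector g_{i;j} of the n-dimensional G-pattern, and its last n entries are zero. -/
/-!
With principal coefficients the bottom half of `B̃_j` is `C_j`, and the frozen columns
`g̃_{n+1}, …, g̃_{2n}` are never mutated, so they remain the unit vectors: `G̃_j` is the block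
matrix `[G_j, 0; 0, I]`. In the mutation of `g̃_k` the frozen columns then contribute
`∑_p [-ε c_{pk}]_+ e_{n+p}`, which cancels exactly against the correction term coming from the
identity block of `B̃_0`; hence the bottom entries stay `0` and the top entries obey the recursion
of `G`.
-/

open Matrix

namespace PrincipalCoefficients

variable {n : ℕ}

variable {α : Type*} [Zero α] [One α]

def extendByOne (G : Matrix (Fin n) (Fin n) α) : Matrix (Fin (n + n)) (Fin (n + n)) α :=
  reindex finSumFinEquiv finSumFinEquiv (fromBlocks G 0 0 1)

lemma natAdd_ne_castAdd {m : ℕ} (a : Fin n) (b : Fin m) : Fin.natAdd m a ≠ Fin.castAdd n b := by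
  rw [Ne, Fin.ext_iff]
  simp only [Fin.val_natAdd, Fin.val_castAdd]
  omega

lemma extendByOne_apply (G : Matrix (Fin n) (Fin n) α) (a b : Fin (n + n)) :
    extendByOne G a b = fromBlocks G 0 0 1 (finSumFinEquiv.symm a) (finSumFinEquiv.symm b) :=
  rfl

section extendByOne

variable (G : Matrix (Fin n) (Fin n) α) (l i : Fin n)

@[simp]
lemma extendByOne_castAdd_castAdd : extendByOne G (Fin.castAdd n l) (Fin.castAdd n i) = G l i := by
  rw [extendByOne_apply, finSumFinEquiv_symm_apply_castAdd, finSumFinEquiv_symm_apply_castAdd]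
  rfl

@[simp]
lemma extendByOne_natAdd_castAdd : extendByOne G (Fin.natAdd n l) (Fin.castAdd n i) = 0 := by
  rw [extendByOne_apply, finSumFinEquiv_symm_apply_natAdd, finSumFinEquiv_symm_apply_castAdd]
  rfl

@[simp]
lemma extendByOne_castAdd_natAdd : extendByOne G (Fin.castAdd n l) (Fin.natAdd n i) = 0 := by
  rw [extendByOne_apply, finSumFinEquiv_symm_apply_castAdd, finSumFinEquiv_symm_apply_natAdd]
  rfl

@[simp]
lemma extendByOne_natAdd_natAdd :
    extendByOne G (Fin.natAdd n l) (Fin.natAdd n i) = (1 : Matrix (Fin n) (Fin n) α) l i := by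
  rw [extendByOne_apply, finSumFinEquiv_symm_apply_natAdd, finSumFinEquiv_symm_apply_natAdd]
  rfl

end extendByOne

@[simp]
lemma extendByOne_one : extendByOne (1 : Matrix (Fin n) (Fin n) α) = 1 := by
  rw [extendByOne, fromBlocks_one, reindex_apply, submatrix_one_equiv]

/-! One mutation step at `k` of `B̃`, `C`, `G̃` and `G`, with `r = r_k` and `ε` the sign of the
`k`-th c-vector; `B₀` is the initial exchange matrix (extended for `G̃`). -/

variable (r ε : ℤ) (k : Fin n)

def mutateBt (B : Matrix (Fin (n + n)) (Fin n) ℤ) : Matrix (Fin (n + n)) (Fin n) ℤ :=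
  fun a b =>
    if a = Fin.castAdd n k ∨ b = k then -B a b
    else B a b + r * (max (-(ε * B a k)) 0 * B (Fin.castAdd n k) b
      + B a k * max (ε * B (Fin.castAdd n k) b) 0)

def mutateC (B : Matrix (Fin (n + n)) (Fin n) ℤ) (C : Matrix (Fin n) (Fin n) ℤ) :
    Matrix (Fin n) (Fin n) ℤ :=
  fun a b =>
    if b = k then -C a b
    else C a b + r * (C a k * max (ε * B (Fin.castAdd n k) b) 0
      + max (-(ε * C a k)) 0 * B (Fin.castAdd n k) b)

def mutateGt (B B₀ : Matrix (Fin (n + n)) (Fin n) ℤ) (C : Matrix (Fin n) (Fin n) ℤ)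
    (G : Matrix (Fin (n + n)) (Fin (n + n)) ℤ) : Matrix (Fin (n + n)) (Fin (n + n)) ℤ :=
  fun l i =>
    if i = Fin.castAdd n k then
      -G l i + r * ((∑ p, max (-(ε * B p k)) 0 * G l p) - ∑ p, max (-(ε * C p k)) 0 * B₀ l p)
    else G l i

def mutateG (B : Matrix (Fin (n + n)) (Fin n) ℤ) (B₀ C G : Matrix (Fin n) (Fin n) ℤ) :
    Matrix (Fin n) (Fin n) ℤ :=
  fun l i =>
    if i = k then
      -G l i + r * ((∑ p, max (-(ε * B (Fin.castAdd n p) k)) 0 * G l p)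
        - ∑ p, max (-(ε * C p k)) 0 * B₀ l p)
    else G l i

variable {r ε k}

lemma mutateBt_natAdd_eq_mutateC {B : Matrix (Fin (n + n)) (Fin n) ℤ}
    {C : Matrix (Fin n) (Fin n) ℤ} (hB : ∀ a b, B (Fin.natAdd n a) b = C a b) (a b : Fin n) :
    mutateBt r ε k B (Fin.natAdd n a) b = mutateC r ε k B C a b := by
  simp only [mutateBt, mutateC, natAdd_ne_castAdd, false_or, hB]
  split_ifs <;> ring

lemma mutateGt_extendByOne {B Bext₀ : Matrix (Fin (n + n)) (Fin n) ℤ}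
    {B₀ C G : Matrix (Fin n) (Fin n) ℤ} (hB : ∀ a b, B (Fin.natAdd n a) b = C a b)
    (hBext₀top : ∀ i j, Bext₀ (Fin.castAdd n i) j = B₀ i j)
    (hBext₀bot : ∀ i j, Bext₀ (Fin.natAdd n i) j = if i = j then 1 else 0) :
    mutateGt r ε k B Bext₀ C (extendByOne G) = extendByOne (mutateG r ε k B B₀ C G) := by
  ext l i
  induction i using Fin.addCases with
  | right i =>
    simp only [mutateGt, if_neg (natAdd_ne_castAdd i k)]
    induction l using Fin.addCases <;>
      simp only [extendByOne_castAdd_natAdd, extendByOne_natAdd_natAdd]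
  | left i =>
    simp only [mutateGt, Fin.castAdd_inj]
    induction l using Fin.addCases with
    | left l =>
      simp only [mutateG, extendByOne_castAdd_castAdd]
      split_ifs
      · simp only [Fin.sum_univ_add, extendByOne_castAdd_castAdd, extendByOne_castAdd_natAdd,
          hBext₀top, mul_zero, Finset.sum_const_zero, add_zero]
      · rfl
    | right l =>
      -- the frozen columns contribute `[-ε c_{lk}]_+`, cancelling the identity block of `B̃₀`
      simp only [extendByOne_natAdd_castAdd, Fin.sum_univ_add, extendByOne_natAdd_natAdd, hB,
        hBext₀bot, one_apply, mul_zero, Finset.sum_const_zero, zero_add, sub_self, neg_zero,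
        ite_self]

end PrincipalCoefficients

open PrincipalCoefficients in
theorem stmt_4_general (n K : ℕ) (r : Fin n → ℤ)
    (B₀ : Matrix (Fin n) (Fin n) ℤ)
    (idx : ℕ → Fin n) (ε : ℕ → ℤ)
    (Bt : ℕ → Matrix (Fin (n + n)) (Fin n) ℤ)
    (C : ℕ → Matrix (Fin n) (Fin n) ℤ)
    (Gt : ℕ → Matrix (Fin (n + n)) (Fin (n + n)) ℤ)
    (G : ℕ → Matrix (Fin n) (Fin n) ℤ)
    (hBt0top : ∀ (i j : Fin n), Bt 0 (Fin.castAdd n i) j = B₀ i j)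
    (hBt0bot : ∀ (i j : Fin n), Bt 0 (Fin.natAdd n i) j = if i = j then 1 else 0)
    (hC0 : C 0 = 1) (hGt0 : Gt 0 = 1) (hG0 : G 0 = 1)
    (hBt : ∀ j < K, ∀ (a : Fin (n + n)) (b : Fin n),
      Bt (j + 1) a b =
        if a = Fin.castAdd n (idx (j + 1)) ∨ b = idx (j + 1) then -(Bt j a b)
        else Bt j a b + r (idx (j + 1)) *
          (max (-(ε (j + 1) * Bt j a (idx (j + 1)))) 0 * Bt j (Fin.castAdd n (idx (j + 1))) b
            + Bt j a (idx (j + 1)) * max (ε (j + 1) * Bt j (Fin.castAdd n (idx (j + 1))) b) 0))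
    (hC : ∀ j < K, ∀ (a b : Fin n),
      C (j + 1) a b =
        if b = idx (j + 1) then -(C j a b)
        else C j a b + r (idx (j + 1)) *
          (C j a (idx (j + 1)) * max (ε (j + 1) * Bt j (Fin.castAdd n (idx (j + 1))) b) 0
            + max (-(ε (j + 1) * C j a (idx (j + 1)))) 0 * Bt j (Fin.castAdd n (idx (j + 1))) b))
    (hGt : ∀ j < K, ∀ (l i : Fin (n + n)),
      Gt (j + 1) l i =
        if i = Fin.castAdd n (idx (j + 1)) then
          -(Gt j l i) + r (idx (j + 1)) *
            ((∑ p : Fin (n + n), max (-(ε (j + 1) * Bt j p (idx (j + 1)))) 0 * Gt j l p)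
              - ∑ p : Fin n, max (-(ε (j + 1) * C j p (idx (j + 1)))) 0 * Bt 0 l p)
        else Gt j l i)
    (hG : ∀ j < K, ∀ (l i : Fin n),
      G (j + 1) l i =
        if i = idx (j + 1) then
          -(G j l i) + r (idx (j + 1)) *
            ((∑ p : Fin n,
                max (-(ε (j + 1) * Bt j (Fin.castAdd n p) (idx (j + 1)))) 0 * G j l p)
              - ∑ p : Fin n, max (-(ε (j + 1) * C j p (idx (j + 1)))) 0 * B₀ l p)
        else G j l i) :
    ∀ j ≤ K, ∀ (i l : Fin n),
      Gt j (Fin.castAdd n l) (Fin.castAdd n i) = G j l i ∧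
      Gt j (Fin.natAdd n l) (Fin.castAdd n i) = 0 := by
  suffices invariant : ∀ j ≤ K,
      (∀ a b, Bt j (Fin.natAdd n a) b = C j a b) ∧ Gt j = extendByOne (G j) by
    intro j hj i l
    rw [(invariant j hj).2, extendByOne_castAdd_castAdd, extendByOne_natAdd_castAdd]
    exact ⟨rfl, rfl⟩
  intro j
  induction j with
  | zero =>
    intro _
    refine ⟨fun a b => ?_, by rw [hGt0, hG0, extendByOne_one]⟩
    rw [hBt0bot, hC0, one_apply]
  | succ j ih =>
    intro hj
    obtain ⟨hBC, hGtG⟩ := ih (Nat.le_of_succ_le hj)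
    have hBt' : Bt (j + 1) = mutateBt (r (idx (j + 1))) (ε (j + 1)) (idx (j + 1)) (Bt j) :=
      Matrix.ext (hBt j hj)
    have hC' : C (j + 1) = mutateC (r (idx (j + 1))) (ε (j + 1)) (idx (j + 1)) (Bt j) (C j) :=
      Matrix.ext (hC j hj)
    have hGt' : Gt (j + 1) =
        mutateGt (r (idx (j + 1))) (ε (j + 1)) (idx (j + 1)) (Bt j) (Bt 0) (C j) (Gt j) :=
      Matrix.ext (hGt j hj)
    have hG' : G (j + 1) =
        mutateG (r (idx (j + 1))) (ε (j + 1)) (idx (j + 1)) (Bt j) B₀ (C j) (G j) :=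
      Matrix.ext (hG j hj)
    refine ⟨?_, ?_⟩
    · rw [hBt', hC']
      exact mutateBt_natAdd_eq_mutateC hBC
    · rw [hGt', hG', hGtG]
      exact mutateGt_extendByOne hBC hBt0top hBt0bot

/-- For a generalized cluster pattern with principal coefficients
(`m = 2n`, `B̃_0 = [B_0; I_n]`), for every `0 ≤ j ≤ K` and `1 ≤ i ≤ n` the extended
`g`-vector satisfies `g̃_{i;j} = (g_{i;j}, 0)`: its first `n` entries form the `g`-vector
of the `n`-dimensional `G`-pattern and its last `n` entries vanish. -/
theorem stmt_4 (n K : ℕ) (hn : 1 ≤ n)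
    (r : Fin n → ℤ) (hr : ∀ i, 0 < r i)
    (B₀ : Matrix (Fin n) (Fin n) ℤ)
    (idx : ℕ → Fin n) (ε : ℕ → ℤ)
    (hε : ∀ j < K, ε (j + 1) = 1 ∨ ε (j + 1) = -1)
    (Bt : ℕ → Matrix (Fin (n + n)) (Fin n) ℤ)
    (C : ℕ → Matrix (Fin n) (Fin n) ℤ)
    (Gt : ℕ → Matrix (Fin (n + n)) (Fin (n + n)) ℤ)
    (G : ℕ → Matrix (Fin n) (Fin n) ℤ)
    (hBt0top : ∀ (i j : Fin n), Bt 0 (Fin.castAdd n i) j = B₀ i j)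
    (hBt0bot : ∀ (i j : Fin n), Bt 0 (Fin.natAdd n i) j = if i = j then 1 else 0)
    (hC0 : C 0 = 1) (hGt0 : Gt 0 = 1) (hG0 : G 0 = 1)
    -- at each step the c-vector is nonzero and sign-coherent with common sign ε_j
    (hcv : ∀ j < K, (∃ l, C j l (idx (j + 1)) ≠ 0) ∧
      ∀ l, 0 ≤ ε (j + 1) * C j l (idx (j + 1)))
    (hBt : ∀ j < K, ∀ (a : Fin (n + n)) (b : Fin n),
      Bt (j + 1) a b =
        if a = Fin.castAdd n (idx (j + 1)) ∨ b = idx (j + 1) then -(Bt j a b)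
        else Bt j a b + r (idx (j + 1)) *
          (max (-(ε (j + 1) * Bt j a (idx (j + 1)))) 0 * Bt j (Fin.castAdd n (idx (j + 1))) b
            + Bt j a (idx (j + 1)) * max (ε (j + 1) * Bt j (Fin.castAdd n (idx (j + 1))) b) 0))
    (hC : ∀ j < K, ∀ (a b : Fin n),
      C (j + 1) a b =
        if b = idx (j + 1) then -(C j a b)
        else C j a b + r (idx (j + 1)) *
          (C j a (idx (j + 1)) * max (ε (j + 1) * Bt j (Fin.castAdd n (idx (j + 1))) b) 0
            + max (-(ε (j + 1) * C j a (idx (j + 1)))) 0 * Bt j (Fin.castAdd n (idx (j + 1))) b))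
    (hGt : ∀ j < K, ∀ (l i : Fin (n + n)),
      Gt (j + 1) l i =
        if i = Fin.castAdd n (idx (j + 1)) then
          -(Gt j l i) + r (idx (j + 1)) *
            ((∑ p : Fin (n + n), max (-(ε (j + 1) * Bt j p (idx (j + 1)))) 0 * Gt j l p)
              - ∑ p : Fin n, max (-(ε (j + 1) * C j p (idx (j + 1)))) 0 * Bt 0 l p)
        else Gt j l i)
    (hG : ∀ j < K, ∀ (l i : Fin n),
      G (j + 1) l i =
        if i = idx (j + 1) then
          -(G j l i) + r (idx (j + 1)) *
            ((∑ p : Fin n,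
                max (-(ε (j + 1) * Bt j (Fin.castAdd n p) (idx (j + 1)))) 0 * G j l p)
              - ∑ p : Fin n, max (-(ε (j + 1) * C j p (idx (j + 1)))) 0 * B₀ l p)
        else G j l i) :
    ∀ j ≤ K, ∀ (i l : Fin n),
      Gt j (Fin.castAdd n l) (Fin.castAdd n i) = G j l i ∧
      Gt j (Fin.natAdd n l) (Fin.castAdd n i) = 0 :=
  stmt_4_general n K r B₀ idx ε Bt C Gt G hBt0top hBt0bot hC0 hGt0 hG0 hBt hC hGt hG
end

section
/- Let K₀ be a field and F₀ the field of rational functions over K₀ in the variables x_1,…,x_n. Fix k ∈ {1,…,n} and nonnegative integers a_1,…,a_n with a_k = 0. Let τ, τ' : F₀ → F₀ be K₀-algebra homomorphisms with τ(x_i) = x_i and τ'(x_i) = x_i for all i ≠ k, and τ(x_k) = τ'(x_k) = x_k^{-1}·∏_{j≠k} x_j^{a_j}. Then τ ∘ τ' = id_{F₀} (in particular this monomial substitution is an involutive automorphism of F₀). In the generalized cluster algebra setting, taking a_j = [−ε_{k;t}·b_{jk;t}·r_k]_+ this gives τ_{k;t} ∘ τ_{k;t'} = 1. -/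
/-! A ring endomorphism of the rational function field is determined by the images of the
constants and the variables, so it suffices to check `τ ∘ τ'` on these. Only `x_k` moves, and
since `τ` fixes the monomial `p = ∏_{j ≠ k} x_j^{a_j}`, it sends `x_k⁻¹ p` to
`(x_k⁻¹ p)⁻¹ p = x_k`. -/

open MvPolynomial

theorem IsLocalization.mvPolynomial_ringHom_ext {σ R S T : Type*} [CommRing R] [CommRing S]
    [Semiring T] [Algebra (MvPolynomial σ R) S] (M : Submonoid (MvPolynomial σ R))
    [IsLocalization M S] {f g : S →+* T}
    (hC : ∀ c, f (algebraMap (MvPolynomial σ R) S (C c)) =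
      g (algebraMap (MvPolynomial σ R) S (C c)))
    (hX : ∀ i, f (algebraMap (MvPolynomial σ R) S (X i)) =
      g (algebraMap (MvPolynomial σ R) S (X i))) :
    f = g :=
  IsLocalization.ringHom_ext M <| MvPolynomial.ringHom_ext hC hX

theorem RingHom.map_inv_mul_of_map_eq_inv_mul {F : Type*} [Field F] (τ : F →+* F) {x p : F}
    (hp : p ≠ 0) (hτp : τ p = p) (hτx : τ x = x⁻¹ * p) : τ (x⁻¹ * p) = x := by
  rw [map_mul, map_inv₀, hτx, hτp, mul_inv, inv_inv, mul_assoc, inv_mul_cancel₀ hp, mul_one]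

theorem stmt_5_general (n : ℕ) (K₀ : Type*) [Field K₀] (k : Fin n)
    (a : Fin n → ℕ)
    (τ τ' : FractionRing (MvPolynomial (Fin n) K₀) →+*
      FractionRing (MvPolynomial (Fin n) K₀))
    (hτc : ∀ c : K₀,
      τ (algebraMap (MvPolynomial (Fin n) K₀) _ (MvPolynomial.C c)) =
        algebraMap (MvPolynomial (Fin n) K₀) _ (MvPolynomial.C c))
    (hτ'c : ∀ c : K₀,
      τ' (algebraMap (MvPolynomial (Fin n) K₀) _ (MvPolynomial.C c)) =
        algebraMap (MvPolynomial (Fin n) K₀) _ (MvPolynomial.C c))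
    (hτx : ∀ i, i ≠ k →
      τ (algebraMap (MvPolynomial (Fin n) K₀) _ (MvPolynomial.X i)) =
        algebraMap (MvPolynomial (Fin n) K₀) _ (MvPolynomial.X i))
    (hτ'x : ∀ i, i ≠ k →
      τ' (algebraMap (MvPolynomial (Fin n) K₀) _ (MvPolynomial.X i)) =
        algebraMap (MvPolynomial (Fin n) K₀) _ (MvPolynomial.X i))
    (hτk :
      τ (algebraMap (MvPolynomial (Fin n) K₀) _ (MvPolynomial.X k)) =
        (algebraMap (MvPolynomial (Fin n) K₀) _ (MvPolynomial.X k))⁻¹ *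
          ∏ j ∈ Finset.univ.erase k,
            (algebraMap (MvPolynomial (Fin n) K₀) _ (MvPolynomial.X j)) ^ (a j))
    (hτ'k :
      τ' (algebraMap (MvPolynomial (Fin n) K₀) _ (MvPolynomial.X k)) =
        (algebraMap (MvPolynomial (Fin n) K₀) _ (MvPolynomial.X k))⁻¹ *
          ∏ j ∈ Finset.univ.erase k,
            (algebraMap (MvPolynomial (Fin n) K₀) _ (MvPolynomial.X j)) ^ (a j)) :
    ∀ f, τ (τ' f) = f := by
  set x : Fin n → FractionRing (MvPolynomial (Fin n) K₀) :=
    fun i => algebraMap (MvPolynomial (Fin n) K₀) _ (X i)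
  have hx0 (i : Fin n) : x i ≠ 0 :=
    IsFractionRing.to_map_ne_zero_of_mem_nonZeroDivisors <|
      mem_nonZeroDivisors_of_ne_zero (X_ne_zero i)
  have hp0 : ∏ j ∈ Finset.univ.erase k, x j ^ a j ≠ 0 :=
    Finset.prod_ne_zero_iff.mpr fun j _ => pow_ne_zero _ (hx0 j)
  have hτp :
      τ (∏ j ∈ Finset.univ.erase k, x j ^ a j) = ∏ j ∈ Finset.univ.erase k, x j ^ a j := by
    simp only [map_prod, map_pow]
    exact Finset.prod_congr rfl fun j hj => by rw [hτx j (Finset.ne_of_mem_erase hj)]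
  have hcomp : τ.comp τ' = RingHom.id _ := by
    refine IsLocalization.mvPolynomial_ringHom_ext (nonZeroDivisors (MvPolynomial (Fin n) K₀))
      (fun c => ?_) (fun i => ?_)
    · simp only [RingHom.comp_apply, RingHom.id_apply, hτ'c, hτc]
    · obtain rfl | hik := eq_or_ne i k
      · rw [RingHom.comp_apply, hτ'k]
        exact τ.map_inv_mul_of_map_eq_inv_mul hp0 hτp hτk
      · simp only [RingHom.comp_apply, RingHom.id_apply, hτ'x i hik, hτx i hik]
  exact RingHom.congr_fun hcomp

/-- Let `F₀` be the field of rational functions over a field `K₀` in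
`x_1, …, x_n`. Fix `k` and nonnegative integers `a_1, …, a_n` with `a_k = 0`. If
`τ, τ' : F₀ → F₀` are `K₀`-algebra homomorphisms fixing `x_i` for `i ≠ k` and sending
`x_k` to `x_k⁻¹·∏_{j ≠ k} x_j^{a_j}`, then `τ ∘ τ' = id`. -/
theorem stmt_5 (n : ℕ) (K₀ : Type*) [Field K₀] (k : Fin n)
    (a : Fin n → ℕ) (hak : a k = 0)
    (τ τ' : FractionRing (MvPolynomial (Fin n) K₀) →+*
      FractionRing (MvPolynomial (Fin n) K₀))
    (hτc : ∀ c : K₀,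
      τ (algebraMap (MvPolynomial (Fin n) K₀) _ (MvPolynomial.C c)) =
        algebraMap (MvPolynomial (Fin n) K₀) _ (MvPolynomial.C c))
    (hτ'c : ∀ c : K₀,
      τ' (algebraMap (MvPolynomial (Fin n) K₀) _ (MvPolynomial.C c)) =
        algebraMap (MvPolynomial (Fin n) K₀) _ (MvPolynomial.C c))
    (hτx : ∀ i, i ≠ k →
      τ (algebraMap (MvPolynomial (Fin n) K₀) _ (MvPolynomial.X i)) =
        algebraMap (MvPolynomial (Fin n) K₀) _ (MvPolynomial.X i))
    (hτ'x : ∀ i, i ≠ k →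
      τ' (algebraMap (MvPolynomial (Fin n) K₀) _ (MvPolynomial.X i)) =
        algebraMap (MvPolynomial (Fin n) K₀) _ (MvPolynomial.X i))
    (hτk :
      τ (algebraMap (MvPolynomial (Fin n) K₀) _ (MvPolynomial.X k)) =
        (algebraMap (MvPolynomial (Fin n) K₀) _ (MvPolynomial.X k))⁻¹ *
          ∏ j ∈ Finset.univ.erase k,
            (algebraMap (MvPolynomial (Fin n) K₀) _ (MvPolynomial.X j)) ^ (a j))
    (hτ'k :
      τ' (algebraMap (MvPolynomial (Fin n) K₀) _ (MvPolynomial.X k)) =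
        (algebraMap (MvPolynomial (Fin n) K₀) _ (MvPolynomial.X k))⁻¹ *
          ∏ j ∈ Finset.univ.erase k,
            (algebraMap (MvPolynomial (Fin n) K₀) _ (MvPolynomial.X j)) ^ (a j)) :
    ∀ f, τ (τ' f) = f :=
  stmt_5_general n K₀ k a τ τ' hτc hτ'c hτx hτ'x hτk hτ'k
end

section
/- Let c ∈ ℤ^n be nonzero and sign-coherent (all entries ≥ 0 or all ≤ 0) with common sign ε, and set c^+ := ε·c ∈ ℕ^n. Fix k ∈ {1,…,n} and set P := ∑_{s=0}^{r_k} z_{k,s}·(ŷ^{c^+})^s ∈ F, a nonzero element. Let h = (h_1,…,h_n) ∈ ℤ^n satisfy ∑_{i=1}^n h_i·(B_0·c^+)_i = 0. Let q, q' : F → F be ring homomorphisms fixing ℚ and every variable y_i and z_{i,s}, with q(x_i) = x_i·P^{−h_i} and q'(x_i) = x_i·P^{h_i} for all i. Then q' ∘ q = id_F and q ∘ q' = id_F. In the generalized cluster algebra setting, taking c the c-vector c_{k;t} and h_i = (e_i, d_k·c_{k;t})_{D_0R} (the condition ∑ h_i·(B_0·c^+)_i = 0 then holds by skew-symmetry of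 D_0·R·B_0), this gives q_{k;t'} ∘ q_{k;t} = 1. -/
noncomputable section

/-- Variables of the ambient field of a generalized cluster algebra of rank `n` with
mutation degrees `r`: cluster variables `x_i`, coefficients `y_i`, and `z_{i,s}` for
`1 ≤ s ≤ r_i - 1` (encoded by `Fin (r i - 1)`, the variable `z i t` standing for
`z_{i, t+1}`). -/
inductive GVar (n : ℕ) (r : Fin n → ℕ) : Type where
  | x : Fin n → GVar n r
  | y : Fin n → GVar n r
  | z : (i : Fin n) → Fin (r i - 1) → GVar n r

/-- The ambient field: rational functions over `ℚ` in the variables `GVar n r`. -/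
abbrev GF (n : ℕ) (r : Fin n → ℕ) : Type := FractionRing (MvPolynomial (GVar n r) ℚ)

/-- The variable `x_i` as an element of the field `GF n r`. -/
def Xv {n : ℕ} {r : Fin n → ℕ} (i : Fin n) : GF n r :=
  algebraMap (MvPolynomial (GVar n r) ℚ) (GF n r) (MvPolynomial.X (GVar.x i))

/-- The variable `y_i` as an element of the field `GF n r`. -/
def Yv {n : ℕ} {r : Fin n → ℕ} (i : Fin n) : GF n r :=
  algebraMap (MvPolynomial (GVar n r) ℚ) (GF n r) (MvPolynomial.X (GVar.y i))

/-- The variable `z_{i,s+1}` (for `s : Fin (r i - 1)`) as an element of `GF n r`. -/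
def Zv {n : ℕ} {r : Fin n → ℕ} (i : Fin n) (s : Fin (r i - 1)) : GF n r :=
  algebraMap (MvPolynomial (GVar n r) ℚ) (GF n r) (MvPolynomial.X (GVar.z i s))

/-- A rational constant as an element of `GF n r`. -/
def Qc {n : ℕ} {r : Fin n → ℕ} (a : ℚ) : GF n r :=
  algebraMap (MvPolynomial (GVar n r) ℚ) (GF n r) (MvPolynomial.C a)

/-- `z_{i,s}` for `0 ≤ s ≤ r i`, with the convention `z_{i,0} = z_{i,r_i} = 1`. -/
def Zc {n : ℕ} (r : Fin n → ℕ) (i : Fin n) (s : ℕ) : GF n r :=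
  if h : 0 < s ∧ s < r i then Zv i ⟨s - 1, by omega⟩ else 1

/-- `x^v = ∏ x_i^{v_i}` for `v ∈ ℤ^n`. -/
def xpow {n : ℕ} (r : Fin n → ℕ) (v : Fin n → ℤ) : GF n r :=
  ∏ i, Xv (r := r) i ^ v i

/-- `ŷ_i = y_i·∏_j x_j^{b_{ji}}`. -/
def yhat {n : ℕ} (r : Fin n → ℕ) (B : Matrix (Fin n) (Fin n) ℤ) (i : Fin n) : GF n r :=
  Yv i * ∏ j, Xv (r := r) j ^ B j i

/-- `ŷ^v = ∏ ŷ_i^{v_i}` for `v ∈ ℤ^n`. -/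
def yhatpow {n : ℕ} (r : Fin n → ℕ) (B : Matrix (Fin n) (Fin n) ℤ) (v : Fin n → ℤ) :
    GF n r :=
  ∏ i, yhat r B i ^ v i

namespace Stmt6Aux

variable {n : ℕ} {r : Fin n → ℕ}

@[simp] lemma Xv_eq (i : Fin n) :
    algebraMap (MvPolynomial (GVar n r) ℚ) (GF n r) (MvPolynomial.X (GVar.x i)) = Xv i := rfl

@[simp] lemma Yv_eq (i : Fin n) :
    algebraMap (MvPolynomial (GVar n r) ℚ) (GF n r) (MvPolynomial.X (GVar.y i)) = Yv i := rfl

lemma algMap_inj :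
    Function.Injective (algebraMap (MvPolynomial (GVar n r) ℚ) (GF n r)) :=
  IsFractionRing.injective _ _

lemma Xv_ne_zero (i : Fin n) : (Xv i : GF n r) ≠ 0 := by
  have := (algMap_inj (n := n) (r := r)).ne (MvPolynomial.X_ne_zero (GVar.x i))
  simpa using this

lemma zpow_sum' {K : Type*} [Field K] {x : K} (hx : x ≠ 0) {ι : Type*} (s : Finset ι)
    (f : ι → ℤ) : x ^ (∑ i ∈ s, f i) = ∏ i ∈ s, x ^ f i := by
  classical
  induction s using Finset.cons_induction with
  | empty => simp
  | cons a s ha ih => rw [Finset.sum_cons, Finset.prod_cons, zpow_add₀ hx, ih]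

/-- The exchange polynomial `P` is nonzero. -/
lemma P_ne_zero (B₀ : Matrix (Fin n) (Fin n) ℤ) (cp : Fin n → ℤ)
    (hcp : ∀ i, 0 ≤ cp i) (i0 : Fin n) (hi0 : cp i0 ≠ 0) (k : Fin n) :
    (∑ s ∈ Finset.range (r k + 1), Zc r k s * yhatpow r B₀ cp ^ s) ≠ 0 := by
  classical
  set m : Fin n → ℕ := fun i => (cp i).toNat with hm_def
  have hm : ∀ i, (m i : ℤ) = cp i := fun i => Int.toNat_of_nonneg (hcp i)
  have hmi0 : m i0 ≠ 0 := by
    intro h0; apply hi0; rw [← hm i0, h0]; rfl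
  set e : Fin n → ℤ := fun j => ∑ i, B₀ j i * (m i : ℤ) with he_def
  set E : Fin n → ℕ := fun j => r k * (e j).natAbs with hE_def
  have hEnn : ∀ (s : ℕ), s ≤ r k → ∀ j, (0 : ℤ) ≤ e j * (s : ℤ) + (E j : ℤ) := by
    intro s hs j
    have h1 : ((E j : ℤ)) = (r k : ℤ) * ((e j).natAbs : ℤ) := by
      rw [hE_def]; push_cast; ring
    have hs' : (s : ℤ) ≤ (r k : ℤ) := by exact_mod_cast hs
    rcases le_or_gt 0 (e j) with hej | hej
    · have : (0:ℤ) ≤ e j * (s : ℤ) := mul_nonneg hej (by positivity)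
      have : (0:ℤ) ≤ (E j : ℤ) := by positivity
      positivity
    · have h2 : ((e j).natAbs : ℤ) = -(e j) := by omega
      nlinarith [mul_le_mul_of_nonpos_right hs' hej.le]
  set Zp : ℕ → MvPolynomial (GVar n r) ℚ := fun s =>
    if h : 0 < s ∧ s < r k then MvPolynomial.X (GVar.z k ⟨s - 1, by omega⟩) else 1
    with hZp_def
  set N : MvPolynomial (GVar n r) ℚ :=
    ∑ s ∈ Finset.range (r k + 1), Zp s *
      ((∏ j, MvPolynomial.X (GVar.x j) ^ (e j * (s : ℤ) + (E j : ℤ)).toNat) *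
       ∏ i, MvPolynomial.X (GVar.y i) ^ (m i * s)) with hN_def
  have hXne : ∀ j, (Xv (r := r) j) ≠ 0 := Xv_ne_zero
  -- M in product form
  have hM : yhatpow r B₀ cp
      = (∏ i, Yv (r := r) i ^ m i) * ∏ j, Xv (r := r) j ^ e j := by
    unfold yhatpow yhat
    calc ∏ i, (Yv (r := r) i * ∏ j, Xv (r := r) j ^ B₀ j i) ^ cp i
        = ∏ i, (Yv (r := r) i ^ m i * ∏ j, Xv (r := r) j ^ (B₀ j i * (m i : ℤ))) := by
          refine Finset.prod_congr rfl fun i _ => ?_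
          rw [← hm i, zpow_natCast, mul_pow, ← Finset.prod_pow]
          congr 1
          refine Finset.prod_congr rfl fun j _ => ?_
          rw [← zpow_natCast (Xv (r := r) j ^ B₀ j i) (m i), ← zpow_mul]
      _ = (∏ i, Yv (r := r) i ^ m i) * ∏ i, ∏ j, Xv (r := r) j ^ (B₀ j i * (m i : ℤ)) :=
          Finset.prod_mul_distrib
      _ = (∏ i, Yv (r := r) i ^ m i) * ∏ j, Xv (r := r) j ^ e j := by
          congr 1
          rw [Finset.prod_comm]
          exact Finset.prod_congr rfl fun j _ => (zpow_sum' (hXne j) _ _).symm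
  have hA : algebraMap (MvPolynomial (GVar n r) ℚ) (GF n r) N
      = (∑ s ∈ Finset.range (r k + 1), Zc r k s * yhatpow r B₀ cp ^ s)
        * ∏ j, Xv (r := r) j ^ E j := by
    rw [hN_def, map_sum, Finset.sum_mul]
    refine Finset.sum_congr rfl fun s hs => ?_
    have hs' : s ≤ r k := by
      have := Finset.mem_range.mp hs; omega
    have hz : algebraMap (MvPolynomial (GVar n r) ℚ) (GF n r) (Zp s) = Zc r k s := by
      simp only [hZp_def]
      unfold Zc
      split_ifs with hcond
      · rfl
      · exact map_one _
    have hX1 : (∏ j, Xv (r := r) j ^ e j) ^ s * ∏ j, Xv (r := r) j ^ E j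
        = ∏ j, Xv (r := r) j ^ (e j * (s : ℤ) + (E j : ℤ)).toNat := by
      rw [← Finset.prod_pow, ← Finset.prod_mul_distrib]
      refine Finset.prod_congr rfl fun j _ => ?_
      rw [← zpow_natCast (Xv (r := r) j ^ e j) s, ← zpow_mul,
        ← zpow_natCast (Xv (r := r) j) (E j), ← zpow_add₀ (hXne j),
        ← zpow_natCast (Xv (r := r) j) ((e j * (s : ℤ) + (E j : ℤ)).toNat),
        Int.toNat_of_nonneg (hEnn s hs' j)]
    have hY1 : (∏ i, Yv (r := r) i ^ m i) ^ s = ∏ i, Yv (r := r) i ^ (m i * s) := by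
      rw [← Finset.prod_pow]
      exact Finset.prod_congr rfl fun i _ => (pow_mul _ _ _).symm
    rw [map_mul, map_mul, map_prod, map_prod]
    simp only [map_pow, Xv_eq, Yv_eq]
    rw [hz, hM, mul_pow]
    rw [← hX1, ← hY1]
    ring
  -- N is nonzero, via evaluation
  set φ : GVar n r → ℚ := fun v => match v with
    | GVar.y i => if i = i0 then (0 : ℚ) else 1
    | _ => 1 with hφ_def
  have hN0 : MvPolynomial.eval φ N = 1 := by
    rw [hN_def, map_sum]
    have hterm : ∀ s ∈ Finset.range (r k + 1),
        MvPolynomial.eval φ (Zp s *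
          ((∏ j, MvPolynomial.X (GVar.x j) ^ (e j * (s : ℤ) + (E j : ℤ)).toNat) *
           ∏ i, MvPolynomial.X (GVar.y i) ^ (m i * s)))
        = if s = 0 then 1 else 0 := by
      intro s _
      rw [map_mul, map_mul, map_prod, map_prod]
      have h1 : MvPolynomial.eval φ (Zp s) = 1 := by
        simp only [hZp_def]
        split_ifs with hcond
        · simp [hφ_def]
        · simp
      have h2 : (∏ j, MvPolynomial.eval φ (MvPolynomial.X (GVar.x j)
          ^ (e j * (s : ℤ) + (E j : ℤ)).toNat)) = 1 := by
        apply Finset.prod_eq_one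
        intro j _
        simp [hφ_def]
      rw [h1, h2, one_mul, one_mul]
      rcases Nat.eq_zero_or_pos s with hs0 | hs0
      · subst hs0
        simp
      · rw [if_neg (by omega)]
        apply Finset.prod_eq_zero (Finset.mem_univ i0)
        rw [map_pow, MvPolynomial.eval_X]
        have : φ (GVar.y i0) = 0 := by simp [hφ_def]
        rw [this]
        exact zero_pow (by positivity)
    rw [Finset.sum_congr rfl hterm]
    rw [Finset.sum_ite_eq' (Finset.range (r k + 1)) 0 (fun _ => (1:ℚ))]
    simp
  have hNne : N ≠ 0 := by
    intro h0
    rw [h0, map_zero] at hN0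
    exact one_ne_zero hN0.symm
  have hmapN : algebraMap (MvPolynomial (GVar n r) ℚ) (GF n r) N ≠ 0 := by
    intro h0
    exact hNne (algMap_inj (by simpa using h0))
  rw [hA] at hmapN
  intro hP
  rw [hP, zero_mul] at hmapN
  exact hmapN rfl

/-- A ring endomorphism fixing `y`, `z` and multiplying `x_i` by `P^{g i}` with
`∑ g_j (B₀ c⁺)_j = 0` fixes `P`. -/
lemma q_fix (B₀ : Matrix (Fin n) (Fin n) ℤ) (cp : Fin n → ℤ) (k : Fin n)
    (hP : (∑ s ∈ Finset.range (r k + 1), Zc r k s * yhatpow r B₀ cp ^ s) ≠ 0)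
    (g : Fin n → ℤ) (hg : ∑ i, g i * B₀.mulVec cp i = 0)
    (q : GF n r →+* GF n r)
    (hqy : ∀ i, q (Yv i) = Yv i) (hqz : ∀ i s, q (Zv i s) = Zv i s)
    (hqx : ∀ i, q (Xv i) = Xv i *
      (∑ s ∈ Finset.range (r k + 1), Zc r k s * yhatpow r B₀ cp ^ s) ^ (g i)) :
    q (∑ s ∈ Finset.range (r k + 1), Zc r k s * yhatpow r B₀ cp ^ s)
      = ∑ s ∈ Finset.range (r k + 1), Zc r k s * yhatpow r B₀ cp ^ s := by
  set P : GF n r := ∑ s ∈ Finset.range (r k + 1), Zc r k s * yhatpow r B₀ cp ^ s with hP_def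
  have hyh : ∀ i, q (yhat r B₀ i) = yhat r B₀ i * P ^ (∑ j, g j * B₀ j i) := by
    intro i
    unfold yhat
    calc q (Yv (r := r) i * ∏ j, Xv (r := r) j ^ B₀ j i)
        = Yv (r := r) i * ∏ j, (Xv (r := r) j ^ B₀ j i * P ^ (g j * B₀ j i)) := by
          rw [map_mul, hqy, map_prod]
          congr 1
          refine Finset.prod_congr rfl fun j _ => ?_
          rw [map_zpow₀, hqx, mul_zpow, ← zpow_mul]
      _ = (Yv (r := r) i * ∏ j, Xv (r := r) j ^ B₀ j i) * P ^ (∑ j, g j * B₀ j i) := by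
          rw [Finset.prod_mul_distrib, zpow_sum' hP]
          ring
  have hMfix : q (yhatpow r B₀ cp) = yhatpow r B₀ cp := by
    unfold yhatpow
    rw [map_prod]
    calc ∏ i, q (yhat r B₀ i ^ cp i)
        = ∏ i, (yhat r B₀ i ^ cp i * P ^ ((∑ j, g j * B₀ j i) * cp i)) := by
          refine Finset.prod_congr rfl fun i _ => ?_
          rw [map_zpow₀, hyh, mul_zpow, ← zpow_mul]
      _ = (∏ i, yhat r B₀ i ^ cp i) * P ^ (∑ i, (∑ j, g j * B₀ j i) * cp i) := by
          rw [Finset.prod_mul_distrib, zpow_sum' hP]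
      _ = ∏ i, yhat r B₀ i ^ cp i := by
          have hsum : (∑ i, (∑ j, g j * B₀ j i) * cp i) = ∑ j, g j * B₀.mulVec cp j := by
            simp only [Matrix.mulVec, dotProduct, Finset.sum_mul, Finset.mul_sum]
            rw [Finset.sum_comm]
            exact Finset.sum_congr rfl fun j _ =>
              Finset.sum_congr rfl fun i _ => mul_assoc _ _ _
          rw [hsum, hg, zpow_zero, mul_one]
  rw [map_sum]
  refine Finset.sum_congr rfl fun s _ => ?_
  rw [map_mul, map_pow, hMfix]
  congr 1
  unfold Zc
  split_ifs
  · exact hqz _ _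
  · exact map_one q

/-- Composition lemma: if `q` multiplies `x_i` by `P^{-g i}` and `q'` by `P^{g i}`,
with `q'` fixing `P`, then `q' ∘ q = id`. -/
lemma comp_fix (B₀ : Matrix (Fin n) (Fin n) ℤ) (cp : Fin n → ℤ) (k : Fin n)
    (hP : (∑ s ∈ Finset.range (r k + 1), Zc r k s * yhatpow r B₀ cp ^ s) ≠ 0)
    (g : Fin n → ℤ)
    (q q' : GF n r →+* GF n r)
    (hq0 : ∀ a : ℚ, q (Qc a) = Qc a) (hq'0 : ∀ a : ℚ, q' (Qc a) = Qc a)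
    (hqy : ∀ i, q (Yv i) = Yv i) (hq'y : ∀ i, q' (Yv i) = Yv i)
    (hqz : ∀ i s, q (Zv i s) = Zv i s) (hq'z : ∀ i s, q' (Zv i s) = Zv i s)
    (hqx : ∀ i, q (Xv i) = Xv i *
      (∑ s ∈ Finset.range (r k + 1), Zc r k s * yhatpow r B₀ cp ^ s) ^ (-(g i)))
    (hq'x : ∀ i, q' (Xv i) = Xv i *
      (∑ s ∈ Finset.range (r k + 1), Zc r k s * yhatpow r B₀ cp ^ s) ^ (g i))
    (hq'P : q' (∑ s ∈ Finset.range (r k + 1), Zc r k s * yhatpow r B₀ cp ^ s)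
      = ∑ s ∈ Finset.range (r k + 1), Zc r k s * yhatpow r B₀ cp ^ s) :
    ∀ f, q' (q f) = f := by
  set P : GF n r := ∑ s ∈ Finset.range (r k + 1), Zc r k s * yhatpow r B₀ cp ^ s with hP_def
  have key : q'.comp q = RingHom.id (GF n r) := by
    apply IsLocalization.ringHom_ext (nonZeroDivisors (MvPolynomial (GVar n r) ℚ))
    apply MvPolynomial.ringHom_ext
    · intro a
      simp only [RingHom.comp_apply, RingHom.id_apply]
      show q' (q (Qc a)) = Qc a
      rw [hq0, hq'0]
    · intro v
      simp only [RingHom.comp_apply, RingHom.id_apply]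
      cases v with
      | x i =>
        show q' (q (Xv i)) = Xv i
        rw [hqx, map_mul, map_zpow₀, hq'x, hq'P, mul_assoc, ← zpow_add₀ hP]
        simp
      | y i =>
        show q' (q (Yv i)) = Yv i
        rw [hqy, hq'y]
      | z i s =>
        show q' (q (Zv i s)) = Zv i s
        rw [hqz, hq'z]
  intro f
  exact RingHom.congr_fun key f

end Stmt6Aux

/-- Let `c ∈ ℤ^n` be nonzero and sign-coherent with common sign `ε`,
`c⁺ = ε·c`, `k ∈ [1,n]`, and `P = ∑_{s=0}^{r_k} z_{k,s}·(ŷ^{c⁺})^s`, a nonzero element.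
If `h ∈ ℤ^n` satisfies `∑ h_i·(B₀·c⁺)_i = 0`, and `q, q'` are ring endomorphisms of the
ambient field fixing `ℚ` and all `y_i`, `z_{i,s}`, with `q(x_i) = x_i·P^{-h_i}` and
`q'(x_i) = x_i·P^{h_i}`, then `q' ∘ q = id` and `q ∘ q' = id`. -/
theorem stmt_6 (n : ℕ) (hn : 1 ≤ n) (r : Fin n → ℕ) (hr : ∀ i, 0 < r i)
    (B₀ : Matrix (Fin n) (Fin n) ℤ)
    (c : Fin n → ℤ) (hc : c ≠ 0) (ε : ℤ) (hε : ε = 1 ∨ ε = -1)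
    (hsc : ∀ i, 0 ≤ ε * c i)
    (k : Fin n) (h : Fin n → ℤ)
    (hh : ∑ i, h i * B₀.mulVec (fun j => ε * c j) i = 0)
    (q q' : GF n r →+* GF n r)
    (hq0 : ∀ a : ℚ, q (Qc a) = Qc a) (hq'0 : ∀ a : ℚ, q' (Qc a) = Qc a)
    (hqy : ∀ i, q (Yv i) = Yv i) (hq'y : ∀ i, q' (Yv i) = Yv i)
    (hqz : ∀ i s, q (Zv i s) = Zv i s) (hq'z : ∀ i s, q' (Zv i s) = Zv i s)
    (hqx : ∀ i, q (Xv i) =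
      Xv i * (∑ s ∈ Finset.range (r k + 1),
        Zc r k s * yhatpow r B₀ (fun j => ε * c j) ^ s) ^ (-(h i)))
    (hq'x : ∀ i, q' (Xv i) =
      Xv i * (∑ s ∈ Finset.range (r k + 1),
        Zc r k s * yhatpow r B₀ (fun j => ε * c j) ^ s) ^ (h i)) :
    (∑ s ∈ Finset.range (r k + 1),
        Zc r k s * yhatpow r B₀ (fun j => ε * c j) ^ s) ≠ 0 ∧
    (∀ f, q' (q f) = f) ∧ (∀ f, q (q' f) = f) := by
  classical
  obtain ⟨i0, hi0⟩ : ∃ i, c i ≠ 0 := by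
    by_contra hco
    push_neg at hco
    exact hc (funext hco)
  have hcpi0 : (fun j => ε * c j) i0 ≠ 0 := by
    rcases hε with he | he <;> simp [he, hi0]
  have hP := Stmt6Aux.P_ne_zero (r := r) B₀ (fun j => ε * c j) hsc i0 hcpi0 k
  have hhneg : ∑ i, (-(h i)) * B₀.mulVec (fun j => ε * c j) i = 0 := by
    simp only [neg_mul, Finset.sum_neg_distrib, hh, neg_zero]
  have hqP := Stmt6Aux.q_fix B₀ (fun j => ε * c j) k hP (fun i => -(h i)) hhneg q hqy hqz hqx
  have hq'P := Stmt6Aux.q_fix B₀ (fun j => ε * c j) k hP h hh q' hq'y hq'z hq'x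
  refine ⟨hP, ?_, ?_⟩
  · exact Stmt6Aux.comp_fix B₀ (fun j => ε * c j) k hP h q q'
      hq0 hq'0 hqy hq'y hqz hq'z hqx hq'x hq'P
  · exact Stmt6Aux.comp_fix B₀ (fun j => ε * c j) k hP (fun i => -(h i)) q' q
      hq'0 hq0 hq'y hqy hq'z hqz
      (fun i => by rw [hq'x i, neg_neg]) hqx hqP
end
end

section
/- Let c ∈ ℤ^n be nonzero and sign-coherent with common sign ε, set c^+ := ε·c, fix k ∈ {1,…,n}, and set P := ∑_{s=0}^{r_k} z_{k,s}·(ŷ^{c^+})^s ∈ F. Assume each h_i := (e_i, d_k·c)_{D_0R} is an integer, and let q : F → F be a ring homomorphism fixing ℚ and every variable y_i and z_{i,s} with q(x_i) = x_i·P^{−h_i} for all i. Then for every v ∈ ℤ^n, q(ŷ^v) = ŷ^v·P^{(v, d_k·ĉ)_{D_0R}}, where ĉ := B_0·c; in particular the exponent (v, d_k·ĉ)_{D_0R} = −∑_{i=1}^n h_i·(B_0·v)_i is an integer. -/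
noncomputable section

lemma my_zpow_sum {F : Type*} [Field F] {a : F} (ha : a ≠ 0) {ι : Type*} (s : Finset ι)
    (f : ι → ℤ) : a ^ (∑ i ∈ s, f i) = ∏ i ∈ s, a ^ f i := by
  classical
  induction s using Finset.cons_induction with
  | empty => simp
  | cons i s hi ih => rw [Finset.sum_cons, Finset.prod_cons, zpow_add₀ ha, ih]

/-- With `c` nonzero sign-coherent of sign `ε`, `c⁺ = ε·c`,
`P = ∑_{s=0}^{r_k} z_{k,s}·(ŷ^{c⁺})^s`, and `h_i = (e_i, d_k·c)_{D₀R}` integers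
(the diagonal entries of `D₀·R` being the `d_i⁻¹ = D₀_i·r_i`), any ring endomorphism `q`
of the ambient field fixing `ℚ`, the `y_i` and `z_{i,s}`, with `q(x_i) = x_i·P^{-h_i}`,
satisfies `q(ŷ^v) = ŷ^v·P^{(v, d_k·ĉ)_{D₀R}}` for all `v ∈ ℤ^n`, where `ĉ = B₀·c`;
the exponent equals `-∑ h_i·(B₀·v)_i` and in particular is an integer. -/
theorem stmt_7 (n : ℕ) (hn : 1 ≤ n) (r : Fin n → ℕ) (hr : ∀ i, 0 < r i)
    (B₀ : Matrix (Fin n) (Fin n) ℤ)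
    (D₀ : Fin n → ℤ) (hD₀ : ∀ i, 0 < D₀ i)
    (hskew : ∀ i j, D₀ i * (r i : ℤ) * B₀ i j = -(D₀ j * (r j : ℤ) * B₀ j i))
    (c : Fin n → ℤ) (hc : c ≠ 0) (ε : ℤ) (hε : ε = 1 ∨ ε = -1)
    (hsc : ∀ i, 0 ≤ ε * c i)
    (k : Fin n) (h : Fin n → ℤ)
    (hh : ∀ i, h i * (D₀ k * (r k : ℤ)) = D₀ i * (r i : ℤ) * c i)
    (q : GF n r →+* GF n r)
    (hq0 : ∀ a : ℚ, q (Qc a) = Qc a)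
    (hqy : ∀ i, q (Yv i) = Yv i)
    (hqz : ∀ i s, q (Zv i s) = Zv i s)
    (hqx : ∀ i, q (Xv i) =
      Xv i * (∑ s ∈ Finset.range (r k + 1),
        Zc r k s * yhatpow r B₀ (fun j => ε * c j) ^ s) ^ (-(h i))) :
    ∀ v : Fin n → ℤ,
      q (yhatpow r B₀ v) =
        yhatpow r B₀ v * (∑ s ∈ Finset.range (r k + 1),
          Zc r k s * yhatpow r B₀ (fun j => ε * c j) ^ s) ^
            (-(∑ i, h i * B₀.mulVec v i)) ∧
      (-(∑ i, h i * B₀.mulVec v i)) * (D₀ k * (r k : ℤ)) =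
        ∑ i, v i * (D₀ i * (r i : ℤ)) * B₀.mulVec c i := by
  classical
  set P : GF n r := ∑ s ∈ Finset.range (r k + 1),
      Zc r k s * yhatpow r B₀ (fun j => ε * c j) ^ s with hPdef
  -- nonvanishing of variables
  have hinj : Function.Injective (algebraMap (MvPolynomial (GVar n r) ℚ) (GF n r)) :=
    IsFractionRing.injective _ _
  have hX : ∀ i : Fin n, (Xv i : GF n r) ≠ 0 := by
    intro i
    simp only [Xv]
    rw [map_ne_zero_iff _ hinj]
    exact MvPolynomial.X_ne_zero _
  have hY : ∀ i : Fin n, (Yv i : GF n r) ≠ 0 := by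
    intro i
    simp only [Yv]
    rw [map_ne_zero_iff _ hinj]
    exact MvPolynomial.X_ne_zero _
  have hyh : ∀ i, yhat r B₀ i ≠ (0 : GF n r) := by
    intro i
    apply mul_ne_zero (hY i)
    exact Finset.prod_ne_zero_iff.2 fun j _ => zpow_ne_zero _ (hX j)
  -- some h i is nonzero
  obtain ⟨i0, hi0⟩ : ∃ i, h i ≠ 0 := by
    by_contra hcon
    push_neg at hcon
    apply hc
    funext i
    have h1 := hh i
    rw [hcon i, zero_mul] at h1
    have h2 : (0 : ℤ) < D₀ i * (r i : ℤ) := by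
      have := hD₀ i
      have := hr i
      positivity
    have := h1.symm
    simp only [Pi.zero_apply]
    nlinarith [this]
  have hqinj : Function.Injective q := q.injective
  -- P ≠ 0
  have hP : P ≠ 0 := by
    intro h0
    have h1 := hqx i0
    rw [h0, zero_zpow _ (by simpa using hi0), mul_zero] at h1
    exact hX i0 (hqinj (by rw [h1, map_zero]))
  -- action on yhat
  have hqyhat : ∀ i, q (yhat r B₀ i) = yhat r B₀ i * P ^ (-(∑ j, h j * B₀ j i)) := by
    intro i
    rw [yhat, map_mul, hqy, map_prod]
    have step : ∀ j : Fin n, q (Xv j ^ B₀ j i)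
        = Xv (r := r) j ^ B₀ j i * P ^ (-(h j * B₀ j i)) := by
      intro j
      rw [map_zpow₀, hqx j, mul_zpow, ← zpow_mul, neg_mul]
    rw [Finset.prod_congr rfl fun j _ => step j, Finset.prod_mul_distrib,
      ← my_zpow_sum hP, Finset.sum_neg_distrib, mul_assoc]
  intro v
  constructor
  · have key : q (yhatpow r B₀ v)
        = yhatpow r B₀ v * P ^ (∑ i, -(∑ j, h j * B₀ j i) * v i) := by
      rw [yhatpow, map_prod]
      have step : ∀ i : Fin n, q (yhat r B₀ i ^ v i)
          = yhat r B₀ i ^ v i * P ^ (-(∑ j, h j * B₀ j i) * v i) := by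
        intro i
        rw [map_zpow₀, hqyhat i, mul_zpow, ← zpow_mul]
      rw [Finset.prod_congr rfl fun i _ => step i, Finset.prod_mul_distrib,
        ← my_zpow_sum hP]
    rw [key]
    congr 1
    simp only [neg_mul, Finset.sum_neg_distrib, neg_inj]
    simp only [Matrix.mulVec, dotProduct, Finset.sum_mul, Finset.mul_sum]
    rw [Finset.sum_comm]
    congr 1
    congr 1
    apply Finset.sum_congr rfl; intro a _
    apply Finset.sum_congr rfl; intro b _
    ring
  · have e1 : (-(∑ i, h i * B₀.mulVec v i)) * (D₀ k * (r k : ℤ))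
        = -∑ i, ∑ j, (D₀ i * (r i : ℤ) * c i) * (B₀ i j * v j) := by
      simp only [Matrix.mulVec, dotProduct, Finset.sum_mul, Finset.mul_sum, neg_mul]
      congr 1
      apply Finset.sum_congr rfl; intro i _
      apply Finset.sum_congr rfl; intro j _
      rw [← hh i]; ring
    rw [e1]
    simp only [Matrix.mulVec, dotProduct, Finset.mul_sum, ← Finset.sum_neg_distrib]
    rw [Finset.sum_comm]
    apply Finset.sum_congr rfl; intro a _
    apply Finset.sum_congr rfl; intro b _
    linear_combination (-(v a * c b)) * hskew a b
end
end

section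
/- For every 0 ≤ j ≤ K and every 1 ≤ i ≤ n: τ^{(j)}(x_i) = x^{g_{i;j}}, where g_{i;j} is the i-th column of G_j; and τ^{(j)}((∏_{l=1}^n y_l^{c_{li;j}})·(∏_{l=1}^n x_l^{b_{li;j}})) = ŷ^{c_{i;j}}, where c_{i;j} denotes the i-th column of C_j and b_{li;j} the entries of B_j. -/
noncomputable section

/-!
Following Nakanishi–Zelevinsky, put `J_k = diag(1,…,-1,…,1)`, `E_ε = J_k + r_k [-ε B]_+^{• k}`
(only column `k` added) and `F_ε = J_k + r_k [ε B]_+^{k •}` (only row `k` added). The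
`g`-vector recursion reads `G_j = G_{j-1} E_ε`, and `τ_j` is the monomial map `x^v ↦ x^{E_ε v}`,
so `τ^{(j)}(x^v) = x^{G_j v}`. Sign-coherence turns the `c`-vector recursion into
`C_j = C_{j-1} F_ε`, and `B_{j-1} F_ε = E_ε B_j` as soon as `b_{kk;j-1} = 0`, which holds because
mutation preserves skew-symmetrizability. Hence `B_0 C_j = G_j B_j` for all `j`, and
`τ^{(j)}` maps `∏ y_l^{c_{li;j}} · x^{b_{•i;j}}` to `∏ y_l^{c_{li;j}} · x^{G_j b_{•i;j}}
= ∏ y_l^{c_{li;j}} · x^{B_0 c_{i;j}} = ŷ^{c_{i;j}}`.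
-/

section MatrixMutation

variable {n : ℕ}

def mutateB (m : ℕ) (k : Fin n) (B : Matrix (Fin n) (Fin n) ℤ) : Matrix (Fin n) (Fin n) ℤ :=
  Matrix.of fun a b =>
    if a = k ∨ b = k then -B a b
    else B a b + m * (max (-B a k) 0 * B k b + B a k * max (B k b) 0)

def mutateC (m : ℕ) (k : Fin n) (e : ℤ) (B C : Matrix (Fin n) (Fin n) ℤ) :
    Matrix (Fin n) (Fin n) ℤ :=
  Matrix.of fun a b =>
    if b = k then -C a b
    else C a b + m * (C a k * max (e * B k b) 0 + max (-(e * C a k)) 0 * B k b)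

def mutateG (m : ℕ) (k : Fin n) (e : ℤ) (B G : Matrix (Fin n) (Fin n) ℤ) :
    Matrix (Fin n) (Fin n) ℤ :=
  Matrix.of fun l i =>
    if i = k then -G l i + m * ∑ p, max (-(e * B p k)) 0 * G l p else G l i

def mutationE (m : ℕ) (k : Fin n) (e : ℤ) (B : Matrix (Fin n) (Fin n) ℤ) :
    Matrix (Fin n) (Fin n) ℤ :=
  Matrix.diagonal (fun a => if a = k then -1 else 1) +
    Matrix.of fun a b => if b = k then m * max (-(e * B a k)) 0 else 0

def mutationF (m : ℕ) (k : Fin n) (e : ℤ) (B : Matrix (Fin n) (Fin n) ℤ) :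
    Matrix (Fin n) (Fin n) ℤ :=
  Matrix.diagonal (fun a => if a = k then -1 else 1) +
    Matrix.of fun a b => if a = k then m * max (e * B k b) 0 else 0

variable {m : ℕ} {k : Fin n} {e : ℤ} {B : Matrix (Fin n) (Fin n) ℤ}

lemma mul_mutationE_apply (G : Matrix (Fin n) (Fin n) ℤ) (l i : Fin n) :
    (G * mutationE m k e B) l i =
      G l i * (if i = k then -1 else 1) + if i = k then ∑ a, G l a * (m * max (-(e * B a k)) 0)
        else 0 := by
  rw [mutationE, Matrix.mul_add, Matrix.add_apply, Matrix.mul_diagonal, Matrix.mul_apply]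
  by_cases hi : i = k <;> simp [hi]

lemma mutateG_eq_mul_mutationE (G : Matrix (Fin n) (Fin n) ℤ) :
    mutateG m k e B G = G * mutationE m k e B := by
  ext l i
  rw [mul_mutationE_apply, mutateG, Matrix.of_apply]
  split_ifs
  · rw [Finset.mul_sum]; simp only [mul_comm, mul_left_comm]; ring
  · ring

lemma mutationE_mul_apply (M : Matrix (Fin n) (Fin n) ℤ) (a i : Fin n) :
    (mutationE m k e B * M) a i =
      (if a = k then -1 else 1) * M a i + m * max (-(e * B a k)) 0 * M k i := by
  rw [mutationE, Matrix.add_mul, Matrix.add_apply, Matrix.diagonal_mul, Matrix.mul_apply]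
  simp

lemma mul_mutationF_apply (C : Matrix (Fin n) (Fin n) ℤ) (a i : Fin n) :
    (C * mutationF m k e B) a i =
      C a i * (if i = k then -1 else 1) + C a k * (m * max (e * B k i) 0) := by
  rw [mutationF, Matrix.mul_add, Matrix.add_apply, Matrix.mul_diagonal, Matrix.mul_apply]
  simp

lemma mutateC_eq_mul_mutationF {C : Matrix (Fin n) (Fin n) ℤ} (hBkk : B k k = 0)
    (hC : ∀ a, 0 ≤ e * C a k) : mutateC m k e B C = C * mutationF m k e B := by
  ext a i
  rw [mul_mutationF_apply, mutateC, Matrix.of_apply]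
  have hCa : max (-(e * C a k)) 0 = 0 := max_eq_right (by linarith [hC a])
  split_ifs with hi
  · subst hi; simp [hBkk]
  · simp [hCa]; ring

/-- The sign `ε` may be chosen freely in the mutation rule of exchange matrices. -/
lemma mul_max_sign_mul_add (x y : ℤ) (he : e = 1 ∨ e = -1) :
    x * max (e * y) 0 + max (-(e * x)) 0 * y = x * max y 0 + max (-x) 0 * y := by
  rcases he with rfl | rfl
  · simp
  · simp only [neg_one_mul, neg_neg]
    linear_combination -x * max_zero_sub_eq_self y + y * max_zero_sub_eq_self x

lemma mul_mutationF_eq_mutationE_mul (hBkk : B k k = 0) (he : e = 1 ∨ e = -1) :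
    B * mutationF m k e B = mutationE m k e B * mutateB m k B := by
  ext a i
  rw [mul_mutationF_apply, mutationE_mul_apply]
  simp only [mutateB, Matrix.of_apply]
  by_cases ha : a = k <;> by_cases hi : i = k
  · subst ha hi; simp [hBkk]
  · subst ha; simp [hi, hBkk]
  · subst hi; simp [ha, hBkk]
  · simp only [ha, hi, or_self, if_false, true_or, if_true]
    linear_combination (m : ℤ) * mul_max_sign_mul_add (B a k) (B k i) he

lemma mul_mutateC_eq_mutateG_mul {B₀ C G : Matrix (Fin n) (Fin n) ℤ} (h : B₀ * C = G * B)
    (hBkk : B k k = 0) (he : e = 1 ∨ e = -1) (hC : ∀ a, 0 ≤ e * C a k) :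
    B₀ * mutateC m k e B C = mutateG m k e B G * mutateB m k B := by
  rw [mutateC_eq_mul_mutationF hBkk hC, mutateG_eq_mul_mutationE, ← Matrix.mul_assoc, h,
    Matrix.mul_assoc, mul_mutationF_eq_mutationE_mul hBkk he, Matrix.mul_assoc]

end MatrixMutation

section SkewSymmetrizable

variable {n : ℕ} {w : Fin n → ℤ} {B : Matrix (Fin n) (Fin n) ℤ}

lemma mul_max_zero_eq_of_mul_eq_neg {u v x y : ℤ} (hu : 0 ≤ u) (hv : 0 ≤ v)
    (h : u * x = -(v * y)) : u * max x 0 = v * max (-y) 0 := by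
  rw [mul_max_of_nonneg _ _ hu, mul_max_of_nonneg _ _ hv, h, mul_neg, mul_zero, mul_zero]

lemma mutateB_skew (hw : ∀ a, 0 ≤ w a) (hB : ∀ a b, w a * B a b = -(w b * B b a))
    (m : ℕ) (k : Fin n) (a b : Fin n) :
    w a * mutateB m k B a b = -(w b * mutateB m k B b a) := by
  simp only [mutateB, Matrix.of_apply]
  by_cases hab : a = k ∨ b = k
  · rw [if_pos hab, if_pos hab.symm]
    linear_combination -hB a b
  · rw [if_neg hab, if_neg (by tauto)]
    have hka := mul_max_zero_eq_of_mul_eq_neg (hw k) (hw a) (hB k a)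
    have hkb := mul_max_zero_eq_of_mul_eq_neg (hw k) (hw b) (hB k b)
    linear_combination hB a b - m * B k b * hka + m * max (B k b) 0 * hB a k
      - m * B k a * hkb + m * max (B k a) 0 * hB b k

lemma diag_eq_zero_of_skew {a : Fin n} (hwa : w a ≠ 0)
    (hB : ∀ a b, w a * B a b = -(w b * B b a)) : B a a = 0 :=
  (mul_eq_zero.mp (by linarith [hB a a])).resolve_left hwa

end SkewSymmetrizable

section Monomials

open scoped Matrix

variable {n : ℕ} {r : Fin n → ℕ}

lemma Xv_ne_zero (i : Fin n) : (Xv i : GF n r) ≠ 0 :=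
  (map_ne_zero_iff _ (IsFractionRing.injective _ _)).mpr (MvPolynomial.X_ne_zero _)

lemma zpow_sum₀ {G ι : Type*} [CommGroupWithZero G] {x : G} (hx : x ≠ 0) (s : Finset ι)
    (f : ι → ℤ) : x ^ (∑ i ∈ s, f i) = ∏ i ∈ s, x ^ f i := by
  induction s using Finset.cons_induction with
  | empty => simp
  | cons a s ha ih => rw [Finset.sum_cons, Finset.prod_cons, zpow_add₀ hx, ih]

lemma xpow_add (v v' : Fin n → ℤ) : xpow r (v + v') = xpow r v * xpow r v' := by
  simp only [xpow, Pi.add_apply, zpow_add₀ (Xv_ne_zero _), Finset.prod_mul_distrib]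

lemma xpow_neg (v : Fin n → ℤ) : xpow r (-v) = (xpow r v)⁻¹ := by
  simp only [xpow, Pi.neg_apply, zpow_neg, Finset.prod_inv_distrib]

lemma xpow_single (i : Fin n) : xpow r (Pi.single i 1) = Xv i := by
  rw [xpow, Finset.prod_eq_single i (fun a _ ha => by simp [ha]) (by simp)]
  simp

lemma prod_xpow_col_zpow (M : Matrix (Fin n) (Fin n) ℤ) (v : Fin n → ℤ) :
    ∏ i, xpow r (fun a => M a i) ^ v i = xpow r (M *ᵥ v) :=
  calc ∏ i, (∏ a, Xv a ^ M a i) ^ v i = ∏ i, ∏ a, (Xv a : GF n r) ^ (M a i * v i) := by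
        simp_rw [← Finset.prod_zpow, zpow_mul]
    _ = ∏ a, ∏ i, (Xv a : GF n r) ^ (M a i * v i) := Finset.prod_comm
    _ = xpow r (M *ᵥ v) := by
        simp_rw [xpow, Matrix.mulVec, dotProduct, zpow_sum₀ (Xv_ne_zero _)]

lemma map_xpow (φ : GF n r →+* GF n r) (M : Matrix (Fin n) (Fin n) ℤ)
    (hφ : ∀ i, φ (Xv i) = xpow r fun a => M a i) (v : Fin n → ℤ) :
    φ (xpow r v) = xpow r (M *ᵥ v) := by
  rw [xpow, map_prod]
  simp only [map_zpow₀, hφ]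
  exact prod_xpow_col_zpow M v

lemma yhatpow_eq (B : Matrix (Fin n) (Fin n) ℤ) (c : Fin n → ℤ) :
    yhatpow r B c = (∏ l, Yv l ^ c l) * xpow r (B *ᵥ c) := by
  rw [← prod_xpow_col_zpow, ← Finset.prod_mul_distrib]
  exact Finset.prod_congr rfl fun l _ => mul_zpow _ _ _

lemma map_Xv_eq_xpow_mutationE (φ : GF n r →+* GF n r) {m : ℕ} {k : Fin n} {e : ℤ}
    {B : Matrix (Fin n) (Fin n) ℤ} (hx : ∀ i, i ≠ k → φ (Xv i) = Xv i)
    (hk : φ (Xv k) = (Xv k)⁻¹ * ∏ l, Xv l ^ max (-(e * B l k * (m : ℤ))) 0) (i : Fin n) :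
    φ (Xv i) = xpow r fun a => mutationE m k e B a i := by
  by_cases hi : i = k
  · subst hi
    rw [hk]
    change (Xv i)⁻¹ * xpow r (fun l => max (-(e * B l i * (m : ℤ))) 0) = _
    rw [← xpow_single, ← xpow_neg, ← xpow_add]
    congr 1
    funext a
    have hmax : max (-(e * B a i * (m : ℤ))) 0 = m * max (-(e * B a i)) 0 := by
      rw [mul_max_of_nonneg _ _ (Nat.cast_nonneg m)]
      ring_nf
    by_cases ha : a = i
    · subst ha; simp [mutationE, hmax]
    · simp [mutationE, ha, hmax]
  · rw [hx i hi, ← xpow_single]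
    congr 1
    funext a
    by_cases ha : a = i <;> simp [mutationE, ha, hi]

lemma forall_le_of_succ {K : ℕ} {P : ℕ → Prop} (h0 : P 0) (hs : ∀ j < K, P j → P (j + 1)) :
    ∀ j ≤ K, P j
  | 0, _ => h0
  | j + 1, hj => hs j hj (forall_le_of_succ h0 hs j (Nat.le_of_succ_le hj))

lemma map_Xv_of_monomial_steps {K : ℕ} (T τ : ℕ → (GF n r →+* GF n r))
    (G E : ℕ → Matrix (Fin n) (Fin n) ℤ) (hT0 : T 0 = RingHom.id _)
    (hT : ∀ j < K, T (j + 1) = (T j).comp (τ (j + 1))) (hG0 : G 0 = 1)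
    (hG : ∀ j < K, G (j + 1) = G j * E j)
    (hτ : ∀ j < K, ∀ i, τ (j + 1) (Xv i) = xpow r fun a => E j a i) :
    ∀ j ≤ K, ∀ i, T j (Xv i) = xpow r fun l => G j l i :=
  forall_le_of_succ
    (fun i => by
      rw [hT0, hG0, RingHom.id_apply, ← xpow_single]
      congr 1
      funext l
      simp [Matrix.one_apply, Pi.single_apply])
    fun j hj ih i => by
      rw [hT j hj, RingHom.comp_apply, hτ j hj, map_xpow _ _ ih, hG j hj]
      rfl

end Monomials

theorem stmt_8_general (n K : ℕ) (r : Fin n → ℕ) (hr : ∀ i, 0 < r i)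
    (B₀ : Matrix (Fin n) (Fin n) ℤ)
    (D₀ : Fin n → ℤ) (hD₀ : ∀ i, 0 < D₀ i)
    (hskew : ∀ i j, D₀ i * (r i : ℤ) * B₀ i j = -(D₀ j * (r j : ℤ) * B₀ j i))
    (idx : ℕ → Fin n) (ε : ℕ → ℤ)
    (hε : ∀ j < K, ε (j + 1) = 1 ∨ ε (j + 1) = -1)
    (B C G : ℕ → Matrix (Fin n) (Fin n) ℤ)
    (hB0 : B 0 = B₀) (hC0 : C 0 = 1) (hG0 : G 0 = 1)
    -- at each step the c-vector is nonzero and sign-coherent with common sign ε_j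
    (hcv : ∀ j < K, (∃ l, C j l (idx (j + 1)) ≠ 0) ∧
      ∀ l, 0 ≤ ε (j + 1) * C j l (idx (j + 1)))
    (hB : ∀ j < K, ∀ (a b : Fin n),
      B (j + 1) a b =
        if a = idx (j + 1) ∨ b = idx (j + 1) then -(B j a b)
        else B j a b + (r (idx (j + 1)) : ℤ) *
          (max (-(B j a (idx (j + 1)))) 0 * B j (idx (j + 1)) b
            + B j a (idx (j + 1)) * max (B j (idx (j + 1)) b) 0))
    (hC : ∀ j < K, ∀ (a b : Fin n),
      C (j + 1) a b =
        if b = idx (j + 1) then -(C j a b)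
        else C j a b + (r (idx (j + 1)) : ℤ) *
          (C j a (idx (j + 1)) * max (ε (j + 1) * B j (idx (j + 1)) b) 0
            + max (-(ε (j + 1) * C j a (idx (j + 1)))) 0 * B j (idx (j + 1)) b))
    (hG : ∀ j < K, ∀ (l i : Fin n),
      G (j + 1) l i =
        if i = idx (j + 1) then
          -(G j l i) + (r (idx (j + 1)) : ℤ) *
            ∑ p, max (-(ε (j + 1) * B j p (idx (j + 1)))) 0 * G j l p
        else G j l i)
    (τ : ℕ → (GF n r →+* GF n r))
    (hτy : ∀ j < K, ∀ i, τ (j + 1) (Yv i) = Yv i)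
    (hτx : ∀ j < K, ∀ i, i ≠ idx (j + 1) → τ (j + 1) (Xv i) = Xv i)
    (hτxk : ∀ j < K, τ (j + 1) (Xv (idx (j + 1))) =
      (Xv (idx (j + 1)) : GF n r)⁻¹ *
        ∏ l, Xv l ^ max (-(ε (j + 1) * B j l (idx (j + 1)) * (r (idx (j + 1)) : ℤ))) 0)
    (T : ℕ → (GF n r →+* GF n r))
    (hT0 : T 0 = RingHom.id _)
    (hT : ∀ j < K, T (j + 1) = (T j).comp (τ (j + 1))) :
    ∀ j ≤ K, ∀ i,
      T j (Xv i) = xpow r (fun l => G j l i) ∧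
      T j ((∏ l, Yv (r := r) l ^ C j l i) * ∏ l, Xv (r := r) l ^ B j l i) =
        yhatpow r B₀ (fun l => C j l i) := by
  have hw : ∀ a, 0 < D₀ a * (r a : ℤ) := fun a => mul_pos (hD₀ a) (by exact_mod_cast hr a)
  have hBj : ∀ j < K, B (j + 1) = mutateB (r (idx (j + 1))) (idx (j + 1)) (B j) :=
    fun j hj => Matrix.ext (hB j hj)
  have hCj : ∀ j < K,
      C (j + 1) = mutateC (r (idx (j + 1))) (idx (j + 1)) (ε (j + 1)) (B j) (C j) :=
    fun j hj => Matrix.ext (hC j hj)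
  have hGj : ∀ j < K,
      G (j + 1) = mutateG (r (idx (j + 1))) (idx (j + 1)) (ε (j + 1)) (B j) (G j) :=
    fun j hj => Matrix.ext (hG j hj)
  have hskewB : ∀ j ≤ K, ∀ a b, D₀ a * r a * B j a b = -(D₀ b * r b * B j b a) :=
    forall_le_of_succ (hB0 ▸ hskew) fun j hj ih =>
      hBj j hj ▸ mutateB_skew (fun a => (hw a).le) ih _ _
  have hmat : ∀ j ≤ K, B₀ * C j = G j * B j :=
    forall_le_of_succ (by rw [hB0, hC0, hG0, Matrix.mul_one, Matrix.one_mul]) fun j hj ih => by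
      rw [hBj j hj, hCj j hj, hGj j hj]
      exact mul_mutateC_eq_mutateG_mul ih (diag_eq_zero_of_skew (hw _).ne' (hskewB j hj.le))
        (hε j hj) (hcv j hj).2
  have hTX : ∀ j ≤ K, ∀ i, T j (Xv i) = xpow r fun l => G j l i :=
    map_Xv_of_monomial_steps T τ G
      (fun j => mutationE (r (idx (j + 1))) (idx (j + 1)) (ε (j + 1)) (B j)) hT0 hT hG0
      (fun j hj => by rw [hGj j hj, mutateG_eq_mul_mutationE])
      (fun j hj => map_Xv_eq_xpow_mutationE _ (hτx j hj) (hτxk j hj))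
  have hTY : ∀ j ≤ K, ∀ l, T j (Yv l) = Yv l :=
    forall_le_of_succ (fun l => by rw [hT0, RingHom.id_apply]) fun j hj ih l => by
      rw [hT j hj, RingHom.comp_apply, hτy j hj, ih]
  intro j hj i
  refine ⟨hTX j hj i, ?_⟩
  change T j ((∏ l, Yv l ^ C j l i) * xpow r fun l => B j l i) = _
  rw [map_mul, map_prod, map_xpow _ _ (hTX j hj), yhatpow_eq]
  simp only [map_zpow₀, hTY j hj]
  exact congrArg _ (congrArg _ (funext fun a => congr_fun₂ (hmat j hj).symm a i))

/-- For the tropical parts `τ_j` of the mutations of a generalized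
cluster pattern with principal coefficients, the composite `τ^{(j)} = τ_1∘⋯∘τ_j`
satisfies `τ^{(j)}(x_i) = x^{g_{i;j}}` and
`τ^{(j)}((∏ y_l^{c_{li;j}})·(∏ x_l^{b_{li;j}})) = ŷ^{c_{i;j}}` for all `0 ≤ j ≤ K`. -/
theorem stmt_8 (n K : ℕ) (hn : 1 ≤ n) (r : Fin n → ℕ) (hr : ∀ i, 0 < r i)
    (B₀ : Matrix (Fin n) (Fin n) ℤ)
    (D₀ : Fin n → ℤ) (hD₀ : ∀ i, 0 < D₀ i)
    (hskew : ∀ i j, D₀ i * (r i : ℤ) * B₀ i j = -(D₀ j * (r j : ℤ) * B₀ j i))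
    (idx : ℕ → Fin n) (ε : ℕ → ℤ)
    (hε : ∀ j < K, ε (j + 1) = 1 ∨ ε (j + 1) = -1)
    (B C G : ℕ → Matrix (Fin n) (Fin n) ℤ)
    (hB0 : B 0 = B₀) (hC0 : C 0 = 1) (hG0 : G 0 = 1)
    -- at each step the c-vector is nonzero and sign-coherent with common sign ε_j
    (hcv : ∀ j < K, (∃ l, C j l (idx (j + 1)) ≠ 0) ∧
      ∀ l, 0 ≤ ε (j + 1) * C j l (idx (j + 1)))
    (hB : ∀ j < K, ∀ (a b : Fin n),
      B (j + 1) a b =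
        if a = idx (j + 1) ∨ b = idx (j + 1) then -(B j a b)
        else B j a b + (r (idx (j + 1)) : ℤ) *
          (max (-(B j a (idx (j + 1)))) 0 * B j (idx (j + 1)) b
            + B j a (idx (j + 1)) * max (B j (idx (j + 1)) b) 0))
    (hC : ∀ j < K, ∀ (a b : Fin n),
      C (j + 1) a b =
        if b = idx (j + 1) then -(C j a b)
        else C j a b + (r (idx (j + 1)) : ℤ) *
          (C j a (idx (j + 1)) * max (ε (j + 1) * B j (idx (j + 1)) b) 0
            + max (-(ε (j + 1) * C j a (idx (j + 1)))) 0 * B j (idx (j + 1)) b))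
    (hG : ∀ j < K, ∀ (l i : Fin n),
      G (j + 1) l i =
        if i = idx (j + 1) then
          -(G j l i) + (r (idx (j + 1)) : ℤ) *
            ∑ p, max (-(ε (j + 1) * B j p (idx (j + 1)))) 0 * G j l p
        else G j l i)
    (τ : ℕ → (GF n r →+* GF n r))
    (hτ0 : ∀ j < K, ∀ a : ℚ, τ (j + 1) (Qc a) = Qc a)
    (hτy : ∀ j < K, ∀ i, τ (j + 1) (Yv i) = Yv i)
    (hτz : ∀ j < K, ∀ i s, τ (j + 1) (Zv i s) = Zv i s)
    (hτx : ∀ j < K, ∀ i, i ≠ idx (j + 1) → τ (j + 1) (Xv i) = Xv i)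
    (hτxk : ∀ j < K, τ (j + 1) (Xv (idx (j + 1))) =
      (Xv (idx (j + 1)) : GF n r)⁻¹ *
        ∏ l, Xv l ^ max (-(ε (j + 1) * B j l (idx (j + 1)) * (r (idx (j + 1)) : ℤ))) 0)
    (T : ℕ → (GF n r →+* GF n r))
    (hT0 : T 0 = RingHom.id _)
    (hT : ∀ j < K, T (j + 1) = (T j).comp (τ (j + 1))) :
    ∀ j ≤ K, ∀ i,
      T j (Xv i) = xpow r (fun l => G j l i) ∧
      T j ((∏ l, Yv (r := r) l ^ C j l i) * ∏ l, Xv (r := r) l ^ B j l i) =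
        yhatpow r B₀ (fun l => C j l i) :=
  stmt_8_general n K r hr B₀ D₀ hD₀ hskew idx ε hε B C G hB0 hC0 hG0 hcv hB hC hG τ hτy hτx hτxk T
    hT0 hT
end
end

section
/- μ^{(K)} = q^{(K)} ∘ τ^{(K)} as ring homomorphisms F → F; that is, for every f ∈ F one has μ^{(K)}(f) = q^{(K)}(τ^{(K)}(f)) (Fock–Goncharov decomposition of the mutation composite for generalized cluster algebras with principal coefficients). -/
noncomputable section

/-!
Both sides are ring homomorphisms out of the rational function field, so it suffices to compare
them on the generators, one mutation at a time: writing `T_j = τ^{(j)}`, one shows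
`T_j ∘ μ_{j+1} = q_{j+1} ∘ T_j ∘ τ_{j+1}` and telescopes. The map `T_j` is monomial,
`x_i ↦ x^{g_{i;j}}`, and fixes the coefficients. Through the second duality `G_j B_j = B_0 C_j` it
carries the exchange sum of `μ_{j+1}` to `P_{j+1}`, and the factor `P_{j+1}^{-h_{i,j+1}}` that
`q_{j+1}` contributes to the image of `x^{g_{i;j+1}}` has exponent
`-(g_{i;j+1}, d_k c_{k;j})_{D_0R}`, which by tropical duality is `0` for `i ≠ k` and `1` for `i = k`,
since `c_{k;j+1} = -c_{k;j}`.
-/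

open scoped Matrix

namespace GeneralizedCluster

open Finset MvPolynomial

theorem forall_le_induction {P : ℕ → Prop} {K : ℕ} (h0 : P 0)
    (hs : ∀ j < K, P j → P (j + 1)) : ∀ j ≤ K, P j
  | 0, _ => h0
  | j + 1, hj => hs j hj (forall_le_induction h0 hs j (Nat.le_of_succ_le hj))

theorem eq_mul_of_mul_step_eq {G : Type*} [Monoid G] {M T Q μ τ q : ℕ → G} {K : ℕ}
    (hM0 : M 0 = 1) (hT0 : T 0 = 1) (hQ0 : Q 0 = 1) (hM : ∀ j < K, M (j + 1) = M j * μ (j + 1))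
    (hT : ∀ j < K, T (j + 1) = T j * τ (j + 1)) (hQ : ∀ j < K, Q (j + 1) = Q j * q (j + 1))
    (hstep : ∀ j < K, T j * μ (j + 1) = q (j + 1) * (T j * τ (j + 1))) : M K = Q K * T K := by
  refine forall_le_induction (P := fun j => M j = Q j * T j) (by rw [hM0, hT0, hQ0, one_mul])
    (fun j hj ih => ?_) K le_rfl
  rw [hM j hj, ih, mul_assoc, hstep j hj, hT j hj, hQ j hj, mul_assoc]

section Mutation

variable {ι : Type*}

def IsSkewSymmetrizer (Δ : ι → ℤ) (B : Matrix ι ι ℤ) : Prop :=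
  ∀ a b, Δ a * B a b = -(Δ b * B b a)

theorem IsSkewSymmetrizer.diag_eq_zero {Δ : ι → ℤ} {B : Matrix ι ι ℤ}
    (hB : IsSkewSymmetrizer Δ B) {a : ι} (ha : Δ a ≠ 0) : B a a = 0 := by
  have := hB a a
  exact (mul_eq_zero.mp (by linarith : Δ a * B a a = 0)).resolve_left ha

theorem IsSkewSymmetrizer.mul_max_neg_zero {Δ : ι → ℤ} {B : Matrix ι ι ℤ}
    (hB : IsSkewSymmetrizer Δ B) (hΔ : ∀ i, 0 < Δ i) (a k : ι) :
    Δ a * max (-(B a k)) 0 = Δ k * max (B k a) 0 := by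
  rw [mul_max_of_nonneg _ _ (hΔ a).le, mul_max_of_nonneg _ _ (hΔ k).le, mul_zero, mul_zero,
    mul_neg, hB, neg_neg]

variable [DecidableEq ι]

def IsBMutation (ρ : ℕ) (k : ι) (B B' : Matrix ι ι ℤ) : Prop :=
  ∀ a b, B' a b =
    if a = k ∨ b = k then -(B a b)
    else B a b + (ρ : ℤ) * (max (-(B a k)) 0 * B k b + B a k * max (B k b) 0)

def IsCMutation (ρ : ℕ) (ε : ℤ) (k : ι) (B C C' : Matrix ι ι ℤ) : Prop :=
  ∀ a b, C' a b =
    if b = k then -(C a b)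
    else C a b + (ρ : ℤ) * (C a k * max (ε * B k b) 0 + max (-(ε * C a k)) 0 * B k b)

theorem IsSkewSymmetrizer.of_isBMutation {Δ : ι → ℤ} {B B' : Matrix ι ι ℤ} {ρ : ℕ} {k : ι}
    (hB : IsSkewSymmetrizer Δ B) (hΔ : ∀ i, 0 < Δ i) (hB' : IsBMutation ρ k B B') :
    IsSkewSymmetrizer Δ B' := by
  intro a b
  rw [hB' a b, hB' b a]
  by_cases hab : a = k ∨ b = k
  · rw [if_pos hab, if_pos hab.symm]
    linear_combination -hB a b
  · rw [if_neg hab, if_neg fun h => hab h.symm]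
    linear_combination hB a b + ρ * B k b * hB.mul_max_neg_zero hΔ a k
      + ρ * max (B k b) 0 * hB a k + ρ * B k a * hB.mul_max_neg_zero hΔ b k
      + ρ * max (B k a) 0 * hB b k

variable [Fintype ι]

def IsGMutation (ρ : ℕ) (ε : ℤ) (k : ι) (B G G' : Matrix ι ι ℤ) : Prop :=
  ∀ l i, G' l i =
    if i = k then -(G l i) + (ρ : ℤ) * ∑ p, max (-(ε * B p k)) 0 * G l p
    else G l i

theorem IsGMutation.transpose_apply_self {ρ : ℕ} {ε : ℤ} {k : ι} {B G G' : Matrix ι ι ℤ}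
    (hG' : IsGMutation ρ ε k B G G') :
    G'ᵀ k = -Gᵀ k + ρ • (G *ᵥ fun p => max (-(ε * B p k)) 0) := by
  ext l
  simp [hG' l k, Matrix.mulVec, dotProduct, mul_comm]

theorem IsGMutation.transpose_apply_of_ne {ρ : ℕ} {ε : ℤ} {k i : ι} {B G G' : Matrix ι ι ℤ}
    (hG' : IsGMutation ρ ε k B G G') (hi : i ≠ k) : G'ᵀ i = Gᵀ i := by
  ext l
  simp [hG' l i, hi]

theorem IsGMutation.mul_apply_self {ρ : ℕ} {ε : ℤ} {k : ι} {B B' C C' G G' B₀ : Matrix ι ι ℤ}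
    (hG' : IsGMutation ρ ε k B G G') (hB' : IsBMutation ρ k B B') (hC' : IsCMutation ρ ε k B C C')
    (hkk : B k k = 0) (hGB : G * B = B₀ * C) (a : ι) : (G' * B') a k = (B₀ * C') a k := by
  have hG'B' i : G' a i * B' i k = -(G a i * B i k) := by
    by_cases hi : i = k
    · obtain rfl := hi
      rw [hB', if_pos (Or.inl rfl), hkk]; ring
    · rw [hG', if_neg hi, hB', if_pos (Or.inr rfl)]; ring
  have hB₀C' m : B₀ a m * C' m k = -(B₀ a m * C m k) := by
    rw [hC', if_pos rfl]; ring
  simp only [Matrix.mul_apply, hG'B', hB₀C', sum_neg_distrib, neg_inj]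
  simpa only [Matrix.mul_apply] using congrFun₂ hGB a k

theorem IsGMutation.mul_apply_of_ne {ρ : ℕ} {ε : ℤ} {k b : ι}
    {B B' C C' G G' B₀ : Matrix ι ι ℤ} (hG' : IsGMutation ρ ε k B G G')
    (hB' : IsBMutation ρ k B B') (hC' : IsCMutation ρ ε k B C C') (hε : ε = 1 ∨ ε = -1)
    (hsign : ∀ l, 0 ≤ ε * C l k) (hkk : B k k = 0) (hGB : G * B = B₀ * C) (hb : b ≠ k) (a : ι) :
    (G' * B') a b = (B₀ * C') a b := by
  have gb a b : ∑ i, G a i * B i b = ∑ m, B₀ a m * C m b := by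
    simpa only [Matrix.mul_apply] using congrFun₂ hGB a b
  have hG'B' i : G' a i * B' i b = G a i * B i b + ρ * B k b * (G a i * max (-(B i k)) 0)
      + ρ * max (B k b) 0 * (G a i * B i k)
      - if i = k then ρ * B k b * ∑ p, max (-(ε * B p k)) 0 * G a p else 0 := by
    by_cases hi : i = k
    · obtain rfl := hi
      rw [hG', if_pos rfl, hB', if_pos (Or.inl rfl), if_pos rfl, hkk, neg_zero, max_self]; ring
    · rw [hG', if_neg hi, hB', if_neg (by tauto), if_neg hi]; ring
  have hB₀C' m : B₀ a m * C' m b = B₀ a m * C m b + ρ * max (ε * B k b) 0 * (B₀ a m * C m k) := by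
    rw [hC', if_neg hb, max_eq_right (by linarith [hsign m] : -(ε * C m k) ≤ 0)]; ring
  simp only [Matrix.mul_apply, hG'B', hB₀C', sum_add_distrib, sum_sub_distrib, ← mul_sum,
    sum_ite_eq', mem_univ, if_true, gb]
  rcases hε with rfl | rfl
  · have hS : ∑ p, max (-(1 * B p k)) 0 * G a p = ∑ i, G a i * max (-(B i k)) 0 :=
      sum_congr rfl fun i _ => by rw [one_mul, mul_comm]
    rw [hS, one_mul]; ring
  · have hS : ∑ p, max (-(-1 * B p k)) 0 * G a p
        = ∑ i, G a i * max (-(B i k)) 0 + ∑ m, B₀ a m * C m k := by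
      rw [← gb, ← sum_add_distrib]
      refine sum_congr rfl fun i _ => ?_
      rw [neg_one_mul, neg_neg]
      linear_combination G a i * max_zero_sub_max_neg_zero_eq_self (B i k)
    rw [hS, neg_one_mul]
    linear_combination (ρ * ∑ m, B₀ a m * C m k) * max_zero_sub_max_neg_zero_eq_self (B k b)

theorem IsGMutation.mul_eq_mul {ρ : ℕ} {ε : ℤ} {k : ι} {B B' C C' G G' B₀ : Matrix ι ι ℤ}
    (hG' : IsGMutation ρ ε k B G G') (hB' : IsBMutation ρ k B B') (hC' : IsCMutation ρ ε k B C C')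
    (hε : ε = 1 ∨ ε = -1) (hsign : ∀ l, 0 ≤ ε * C l k) (hkk : B k k = 0)
    (hGB : G * B = B₀ * C) : G' * B' = B₀ * C' := by
  ext a b
  by_cases hb : b = k
  · exact hb ▸ hG'.mul_apply_self hB' hC' hkk hGB a
  · exact hG'.mul_apply_of_ne hB' hC' hε hsign hkk hGB hb a

theorem dotProduct_eq_of_duality {Δ : ι → ℤ} {G C : Matrix ι ι ℤ} {k : ι} {h : ι → ℤ}
    (hΔk : Δ k ≠ 0) (hh : ∀ m, h m * Δ k = Δ m * C m k)
    (hdual : ∀ i, ∑ m, G m i * Δ m * C m k = if i = k then Δ k else 0) (i : ι) :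
    Gᵀ i ⬝ᵥ h = if i = k then 1 else 0 := by
  apply mul_right_cancel₀ hΔk
  simp only [dotProduct, Matrix.transpose_apply, sum_mul, mul_assoc, hh]
  simp only [← mul_assoc, hdual]
  split_ifs <;> simp

end Mutation

theorem prod_zpow_eq_zpow_sum₀ {α G : Type*} [CommGroupWithZero G] (s : Finset α) {a : G}
    (ha : a ≠ 0) (f : α → ℤ) : ∏ i ∈ s, a ^ f i = a ^ ∑ i ∈ s, f i := by
  induction s using Finset.cons_induction with
  | empty => simp
  | cons i s hi ih => rw [prod_cons, sum_cons, zpow_add₀ ha, ih]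

section Field

variable {n : ℕ} {r : Fin n → ℕ}

theorem algebraMap_ne_zero {p : MvPolynomial (GVar n r) ℚ} (hp : p ≠ 0) :
    algebraMap (MvPolynomial (GVar n r) ℚ) (GF n r) p ≠ 0 :=
  (IsFractionRing.to_map_ne_zero_of_mem_nonZeroDivisors (mem_nonZeroDivisors_of_ne_zero hp))

theorem Xv_ne_zero (i : Fin n) : (Xv i : GF n r) ≠ 0 := algebraMap_ne_zero (X_ne_zero _)

theorem GF.ringHom_ext {φ ψ : GF n r →+* GF n r}
    (hx : ∀ i, φ (Xv i) = ψ (Xv i)) (hy : ∀ i, φ (Yv i) = ψ (Yv i))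
    (hz : ∀ i s, φ (Zv i s) = ψ (Zv i s)) : φ = ψ := by
  refine IsLocalization.ringHom_ext (nonZeroDivisors (MvPolynomial (GVar n r) ℚ)) ?_
  refine MvPolynomial.ringHom_ext (fun a => ?_) fun v => ?_
  · exact RingHom.congr_fun (Subsingleton.elim (φ.comp (algebraMap _ _) |>.comp C)
      (ψ.comp (algebraMap _ _) |>.comp C)) a
  · cases v with
    | x i => exact hx i
    | y i => exact hy i
    | z i s => exact hz i s

theorem xpow_add (v w : Fin n → ℤ) : xpow r (v + w) = xpow r v * xpow r w := by
  simp only [xpow, Pi.add_apply, zpow_add₀ (Xv_ne_zero _), prod_mul_distrib]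

theorem xpow_neg (v : Fin n → ℤ) : xpow r (-v) = (xpow r v)⁻¹ := by
  simp only [xpow, Pi.neg_apply, zpow_neg, prod_inv_distrib]

theorem xpow_pow (v : Fin n → ℤ) (m : ℕ) : xpow r v ^ m = xpow r (m • v) := by
  rw [xpow, xpow, ← prod_pow]
  refine prod_congr rfl fun i _ => ?_
  rw [Pi.smul_apply, nsmul_eq_mul, mul_comm, zpow_mul, zpow_natCast]

theorem xpow_single (i : Fin n) : xpow r (Pi.single i (1 : ℤ)) = Xv i := by
  rw [xpow, prod_eq_single i (fun m _ hm => by rw [Pi.single_eq_of_ne hm, zpow_zero])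
    (by simp), Pi.single_eq_same, zpow_one]

theorem prod_xpow_zpow (G : Matrix (Fin n) (Fin n) ℤ) (w : Fin n → ℤ) :
    ∏ l, xpow r (Gᵀ l) ^ w l = xpow r (G *ᵥ w) := by
  simp only [xpow, ← prod_zpow, ← zpow_mul, Matrix.transpose_apply]
  rw [prod_comm]
  exact prod_congr rfl fun m _ => prod_zpow_eq_zpow_sum₀ _ (Xv_ne_zero m) _

def ypow (r : Fin n → ℕ) (w : Fin n → ℤ) : GF n r := ∏ i, Yv i ^ w i

theorem yhatpow_eq_ypow_mul_xpow (B : Matrix (Fin n) (Fin n) ℤ) (w : Fin n → ℤ) :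
    yhatpow r B w = ypow r w * xpow r (B *ᵥ w) := by
  rw [← prod_xpow_zpow, ypow, ← prod_mul_distrib]
  exact prod_congr rfl fun i _ => by rw [yhat, mul_zpow]; rfl

theorem yhatpow_mul_left (B : Matrix (Fin n) (Fin n) ℤ) (a : ℤ) (w : Fin n → ℤ) :
    yhatpow r B (fun i => a * w i) = yhatpow r B w ^ a := by
  simp only [yhatpow, ← prod_zpow, ← zpow_mul, mul_comm]

def evalOneFractions : Submonoid (GF n r) where
  carrier := {f | ∃ a b : MvPolynomial (GVar n r) ℚ, eval 1 a = 1 ∧ eval 1 b = 1 ∧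
    f * algebraMap _ _ b = algebraMap _ _ a}
  mul_mem' := by
    rintro f g ⟨a, b, ha, hb, hf⟩ ⟨a', b', ha', hb', hg⟩
    refine ⟨a * a', b * b', by simp [ha, ha'], by simp [hb, hb'], ?_⟩
    rw [map_mul, map_mul, ← hf, ← hg]; ring
  one_mem' := ⟨1, 1, map_one _, map_one _, by simp⟩

theorem algebraMap_X_mem_evalOneFractions (v : GVar n r) :
    algebraMap (MvPolynomial (GVar n r) ℚ) (GF n r) (X v) ∈ evalOneFractions :=
  ⟨X v, 1, by simp, map_one _, by simp⟩

theorem inv_mem_evalOneFractions {f : GF n r} (hf : f ∈ evalOneFractions) :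
    f⁻¹ ∈ evalOneFractions := by
  obtain ⟨a, b, ha, hb, hab⟩ := hf
  have ha0 : algebraMap _ (GF n r) a ≠ 0 := algebraMap_ne_zero fun h => by simp [h] at ha
  refine ⟨b, a, hb, ha, ?_⟩
  rw [← hab, inv_mul_cancel_left₀ (left_ne_zero_of_mul (hab ▸ ha0))]

theorem zpow_mem_evalOneFractions {f : GF n r} (hf : f ∈ evalOneFractions) (m : ℤ) :
    f ^ m ∈ evalOneFractions := by
  obtain ⟨m, rfl | rfl⟩ := m.eq_nat_or_neg
  · exact zpow_natCast f m ▸ pow_mem hf m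
  · exact (zpow_neg f m).symm ▸ zpow_natCast f m ▸ inv_mem_evalOneFractions (pow_mem hf m)

theorem yhatpow_mem_evalOneFractions (B : Matrix (Fin n) (Fin n) ℤ) (w : Fin n → ℤ) :
    yhatpow r B w ∈ evalOneFractions :=
  prod_mem fun _ _ => zpow_mem_evalOneFractions (mul_mem (algebraMap_X_mem_evalOneFractions _)
    (prod_mem fun _ _ => zpow_mem_evalOneFractions (algebraMap_X_mem_evalOneFractions _) _)) _

theorem exists_eval_one_algebraMap_eq_Zc (κ : Fin n) (s : ℕ) :
    ∃ c : MvPolynomial (GVar n r) ℚ, eval 1 c = 1 ∧ algebraMap _ _ c = Zc r κ s := by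
  unfold Zc
  split
  · exact ⟨X _, by simp, rfl⟩
  · exact ⟨1, map_one _, map_one _⟩

variable (r) in
def exchangePoly (κ : Fin n) (t : GF n r) : GF n r :=
  ∑ s ∈ range (r κ + 1), Zc r κ s * t ^ s

theorem exchangePoly_ne_zero (κ : Fin n) {t : GF n r} (ht : t ∈ evalOneFractions) :
    exchangePoly r κ t ≠ 0 := by
  obtain ⟨a, b, ha, hb, hab⟩ := ht
  choose c hc hcZ using exists_eval_one_algebraMap_eq_Zc (r := r) κ
  set p := ∑ s ∈ range (r κ + 1), c s * a ^ s * b ^ (r κ - s)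
  -- clearing the denominator `b ^ r κ` gives a polynomial whose value at `1` is `r κ + 1`
  have hclear : exchangePoly r κ t * algebraMap _ _ b ^ r κ = algebraMap _ _ p := by
    rw [exchangePoly, sum_mul, map_sum]
    refine sum_congr rfl fun s hs => ?_
    rw [← hcZ, map_mul, map_mul, map_pow, map_pow, ← hab,
      ← pow_mul_pow_sub _ (Nat.lt_succ_iff.mp (mem_range.mp hs))]
    ring
  have hp : eval 1 p = r κ + 1 := by simp [p, hc, ha, hb]
  intro h0
  rw [h0, zero_mul, eq_comm] at hclear
  have : p = 0 := IsFractionRing.injective _ (GF n r) (hclear.trans (map_zero _).symm)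
  rw [this, map_zero] at hp
  exact absurd hp (by positivity)

theorem map_xpow_of_map_Xv {q : GF n r →+* GF n r} {P : GF n r} (hP : P ≠ 0) {h : Fin n → ℤ}
    (hq : ∀ i, q (Xv i) = Xv i * P ^ (-(h i))) (v : Fin n → ℤ) :
    q (xpow r v) = xpow r v * P ^ (-(v ⬝ᵥ h)) := by
  simp only [xpow, map_prod, map_zpow₀, hq, mul_zpow, ← zpow_mul, prod_mul_distrib]
  rw [prod_zpow_eq_zpow_sum₀ _ hP]
  simp [dotProduct, mul_comm]

structure IsTropicalHom (G : Matrix (Fin n) (Fin n) ℤ) (φ : GF n r →+* GF n r) : Prop where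
  map_Xv : ∀ i, φ (Xv i) = xpow r (Gᵀ i)
  map_Yv : ∀ i, φ (Yv i) = Yv i
  map_Zv : ∀ i s, φ (Zv i s) = Zv i s

namespace IsTropicalHom

variable {G : Matrix (Fin n) (Fin n) ℤ} {φ : GF n r →+* GF n r}

theorem one : IsTropicalHom (1 : Matrix (Fin n) (Fin n) ℤ) (RingHom.id (GF n r)) where
  map_Xv i := by
    rw [RingHom.id_apply, ← xpow_single, Matrix.transpose_one]
    congr 1
    ext j
    simp [Matrix.one_apply, Pi.single_apply, eq_comm]
  map_Yv _ := rfl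
  map_Zv _ _ := rfl

theorem map_xpow (hφ : IsTropicalHom G φ) (v : Fin n → ℤ) : φ (xpow r v) = xpow r (G *ᵥ v) := by
  rw [xpow, map_prod, ← prod_xpow_zpow]
  simp only [map_zpow₀, hφ.map_Xv]

theorem map_ypow (hφ : IsTropicalHom G φ) (w : Fin n → ℤ) : φ (ypow r w) = ypow r w := by
  simp only [ypow, map_prod, map_zpow₀, hφ.map_Yv]

theorem map_Zc (hφ : IsTropicalHom G φ) (κ : Fin n) (s : ℕ) : φ (Zc r κ s) = Zc r κ s := by
  unfold Zc
  split
  · exact hφ.map_Zv _ _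
  · exact map_one φ

theorem comp_of_isGMutation (hφ : IsTropicalHom G φ) {τ : GF n r →+* GF n r} {k : Fin n}
    {ε : ℤ} {B G' : Matrix (Fin n) (Fin n) ℤ} (hG' : IsGMutation (r k) ε k B G G')
    (hτy : ∀ i, τ (Yv i) = Yv i) (hτz : ∀ i s, τ (Zv i s) = Zv i s)
    (hτx : ∀ i, i ≠ k → τ (Xv i) = Xv i)
    (hτxk : τ (Xv k) = (Xv k)⁻¹ * xpow r fun l => max (-(ε * B l k * r k)) 0) :
    IsTropicalHom G' (φ.comp τ) where
  map_Xv i := by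
    rw [RingHom.comp_apply]
    by_cases hi : i = k
    · have hw : (fun l => max (-(ε * B l k * r k)) 0) = r k • fun l => max (-(ε * B l k)) 0 := by
        ext l
        rw [Pi.smul_apply, nsmul_eq_mul, mul_max_of_nonneg _ _ (by positivity), mul_zero]
        ring_nf
      rw [hi, hτxk, map_mul, map_inv₀, hφ.map_Xv, hφ.map_xpow, hw, Matrix.mulVec_smul, ← xpow_neg,
        ← xpow_add, hG'.transpose_apply_self]
    · rw [hτx i hi, hφ.map_Xv, hG'.transpose_apply_of_ne hi]
  map_Yv i := by rw [RingHom.comp_apply, hτy, hφ.map_Yv]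
  map_Zv i s := by rw [RingHom.comp_apply, hτz, hφ.map_Zv]

theorem fockGoncharov_step (hφ : IsTropicalHom G φ) {μ τ q : GF n r →+* GF n r} {k : Fin n}
    {ε : ℤ} {B₀ B C G' : Matrix (Fin n) (Fin n) ℤ} {h : Fin n → ℤ}
    (hφτ : IsTropicalHom G' (φ.comp τ)) (hG' : IsGMutation (r k) ε k B G G')
    (hGB : G * B = B₀ * C) (hpair : ∀ i, i ≠ k → Gᵀ i ⬝ᵥ h = 0) (hpair' : G'ᵀ k ⬝ᵥ h = -1)
    (hμy : ∀ i, μ (Yv i) = Yv i) (hμz : ∀ i s, μ (Zv i s) = Zv i s)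
    (hμx : ∀ i, i ≠ k → μ (Xv i) = Xv i)
    (hμxk : μ (Xv k) = (Xv k)⁻¹ * xpow r (fun l => max (-(ε * B l k)) 0) ^ r k *
      ∑ s ∈ range (r k + 1), Zc r k s * (ypow r (fun l => C l k) * xpow r fun l => B l k) ^ (ε * s))
    (hqy : ∀ i, q (Yv i) = Yv i) (hqz : ∀ i s, q (Zv i s) = Zv i s)
    (hqx : ∀ i, q (Xv i) =
      Xv i * exchangePoly r k (yhatpow r B₀ fun m => ε * C m k) ^ (-(h i))) :
    φ.comp μ = q.comp (φ.comp τ) := by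
  have hq := map_xpow_of_map_Xv (exchangePoly_ne_zero k (yhatpow_mem_evalOneFractions _ _)) hqx
  have hGBk : (G *ᵥ fun l => B l k) = B₀ *ᵥ fun l => C l k := by
    ext m
    simpa [Matrix.mulVec, dotProduct, Matrix.mul_apply] using congrFun (congrFun hGB m) k
  refine GF.ringHom_ext (fun i => ?_) (fun i => ?_) (fun i s => ?_)
  · rw [RingHom.comp_apply, RingHom.comp_apply q, hφτ.map_Xv, hq]
    by_cases hi : i = k
    · subst hi
      rw [hpair', neg_neg, zpow_one, hμxk, map_mul, map_mul, map_inv₀, map_pow, hφ.map_Xv,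
        hφ.map_xpow, map_sum, hG'.transpose_apply_self, xpow_add, xpow_neg, xpow_pow]
      congr 1
      refine sum_congr rfl fun s _ => ?_
      rw [map_mul, hφ.map_Zc, map_zpow₀, map_mul, hφ.map_ypow, hφ.map_xpow, hGBk,
        ← yhatpow_eq_ypow_mul_xpow, zpow_mul, zpow_natCast, yhatpow_mul_left]
    · rw [hG'.transpose_apply_of_ne hi, hpair i hi, neg_zero, zpow_zero, mul_one, hμx i hi,
        hφ.map_Xv]
  · rw [RingHom.comp_apply, hμy, hφ.map_Yv, RingHom.comp_apply q, hφτ.map_Yv, hqy]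
  · rw [RingHom.comp_apply, hμz, hφ.map_Zv, RingHom.comp_apply q, hφτ.map_Zv, hqz]

end IsTropicalHom

end Field

end GeneralizedCluster

open GeneralizedCluster

theorem stmt_10_general (n K : ℕ) (r : Fin n → ℕ) (hr : ∀ i, 0 < r i)
    (B₀ : Matrix (Fin n) (Fin n) ℤ)
    (D₀ : Fin n → ℤ) (hD₀ : ∀ i, 0 < D₀ i)
    (hskew : ∀ i j, D₀ i * (r i : ℤ) * B₀ i j = -(D₀ j * (r j : ℤ) * B₀ j i))
    (idx : ℕ → Fin n) (ε : ℕ → ℤ)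
    (hε : ∀ j < K, ε (j + 1) = 1 ∨ ε (j + 1) = -1)
    (B C G : ℕ → Matrix (Fin n) (Fin n) ℤ)
    (hB0 : B 0 = B₀) (hC0 : C 0 = 1) (hG0 : G 0 = 1)
    -- at each step the c-vector is nonzero and sign-coherent with common sign ε_j
    (hcv : ∀ j < K, (∃ l, C j l (idx (j + 1)) ≠ 0) ∧
      ∀ l, 0 ≤ ε (j + 1) * C j l (idx (j + 1)))
    (hB : ∀ j < K, ∀ (a b : Fin n),
      B (j + 1) a b =
        if a = idx (j + 1) ∨ b = idx (j + 1) then -(B j a b)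
        else B j a b + (r (idx (j + 1)) : ℤ) *
          (max (-(B j a (idx (j + 1)))) 0 * B j (idx (j + 1)) b
            + B j a (idx (j + 1)) * max (B j (idx (j + 1)) b) 0))
    (hC : ∀ j < K, ∀ (a b : Fin n),
      C (j + 1) a b =
        if b = idx (j + 1) then -(C j a b)
        else C j a b + (r (idx (j + 1)) : ℤ) *
          (C j a (idx (j + 1)) * max (ε (j + 1) * B j (idx (j + 1)) b) 0
            + max (-(ε (j + 1) * C j a (idx (j + 1)))) 0 * B j (idx (j + 1)) b))
    (hG : ∀ j < K, ∀ (l i : Fin n),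
      G (j + 1) l i =
        if i = idx (j + 1) then
          -(G j l i) + (r (idx (j + 1)) : ℤ) *
            ∑ p, max (-(ε (j + 1) * B j p (idx (j + 1)))) 0 * G j l p
        else G j l i)
    -- tropical duality
    (hdual : ∀ j ≤ K, ∀ (i l : Fin n),
      ∑ m, G j m i * (D₀ m * (r m : ℤ)) * C j m l =
        if i = l then D₀ l * (r l : ℤ) else 0)
    -- the rational numbers h_{i,j} = (e_i, d_{(j)}·c_j)_{D₀R} are integers
    (hfun : ℕ → Fin n → ℤ)
    (hfunint : ∀ j < K, ∀ i,
      hfun (j + 1) i * (D₀ (idx (j + 1)) * (r (idx (j + 1)) : ℤ)) =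
        D₀ i * (r i : ℤ) * C j i (idx (j + 1)))
    (μ : ℕ → (GF n r →+* GF n r))
    (hμy : ∀ j < K, ∀ i, μ (j + 1) (Yv i) = Yv i)
    (hμz : ∀ j < K, ∀ i s, μ (j + 1) (Zv i s) = Zv i s)
    (hμx : ∀ j < K, ∀ i, i ≠ idx (j + 1) → μ (j + 1) (Xv i) = Xv i)
    (hμxk : ∀ j < K, μ (j + 1) (Xv (idx (j + 1))) =
      (Xv (idx (j + 1)) : GF n r)⁻¹ *
        (∏ l, Xv (r := r) l ^ max (-(ε (j + 1) * B j l (idx (j + 1)))) 0) ^ (r (idx (j + 1))) *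
        ∑ s ∈ Finset.range (r (idx (j + 1)) + 1),
          Zc r (idx (j + 1)) s *
            ((∏ l, Yv (r := r) l ^ C j l (idx (j + 1))) *
              ∏ l, Xv (r := r) l ^ B j l (idx (j + 1))) ^ (ε (j + 1) * s))
    (M : ℕ → (GF n r →+* GF n r))
    (hM0 : M 0 = RingHom.id _)
    (hM : ∀ j < K, M (j + 1) = (M j).comp (μ (j + 1)))
    (τ : ℕ → (GF n r →+* GF n r))
    (hτy : ∀ j < K, ∀ i, τ (j + 1) (Yv i) = Yv i)
    (hτz : ∀ j < K, ∀ i s, τ (j + 1) (Zv i s) = Zv i s)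
    (hτx : ∀ j < K, ∀ i, i ≠ idx (j + 1) → τ (j + 1) (Xv i) = Xv i)
    (hτxk : ∀ j < K, τ (j + 1) (Xv (idx (j + 1))) =
      (Xv (idx (j + 1)) : GF n r)⁻¹ *
        ∏ l, Xv l ^ max (-(ε (j + 1) * B j l (idx (j + 1)) * (r (idx (j + 1)) : ℤ))) 0)
    (T : ℕ → (GF n r →+* GF n r))
    (hT0 : T 0 = RingHom.id _)
    (hT : ∀ j < K, T (j + 1) = (T j).comp (τ (j + 1)))
    (q : ℕ → (GF n r →+* GF n r))
    (hqy : ∀ j < K, ∀ i, q (j + 1) (Yv i) = Yv i)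
    (hqz : ∀ j < K, ∀ i s, q (j + 1) (Zv i s) = Zv i s)
    (hqx : ∀ j < K, ∀ i, q (j + 1) (Xv i) =
      Xv i * (∑ s ∈ Finset.range (r (idx (j + 1)) + 1),
        Zc r (idx (j + 1)) s *
          yhatpow r B₀ (fun m => ε (j + 1) * C j m (idx (j + 1))) ^ s) ^ (-(hfun (j + 1) i)))
    (Q : ℕ → (GF n r →+* GF n r))
    (hQ0 : Q 0 = RingHom.id _)
    (hQ : ∀ j < K, Q (j + 1) = (Q j).comp (q (j + 1)))
    : ∀ f, M K f = Q K (T K f) := by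
  have hΔ i : 0 < D₀ i * (r i : ℤ) := mul_pos (hD₀ i) (by exact_mod_cast hr i)
  have hskewB : ∀ j ≤ K, IsSkewSymmetrizer (fun i => D₀ i * (r i : ℤ)) (B j) :=
    forall_le_induction (by rw [hB0]; exact hskew) fun j hj ih =>
      ih.of_isBMutation hΔ (hB j hj)
  have hGB : ∀ j ≤ K, G j * B j = B₀ * C j :=
    forall_le_induction (by rw [hG0, hC0, hB0, one_mul, mul_one]) fun j hj ih =>
      IsGMutation.mul_eq_mul (hG j hj) (hB j hj) (hC j hj) (hε j hj) (hcv j hj).2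
        ((hskewB j hj.le).diag_eq_zero (hΔ _).ne') ih
  have hTrop : ∀ j ≤ K, IsTropicalHom (G j) (T j) :=
    forall_le_induction (by rw [hT0, hG0]; exact IsTropicalHom.one) fun j hj ih =>
      hT j hj ▸ ih.comp_of_isGMutation (hG j hj) (hτy j hj) (hτz j hj) (hτx j hj) (hτxk j hj)
  have hpair j (hj : j ≤ K) (k : Fin n) (h : Fin n → ℤ)
      (hh : ∀ m, h m * (D₀ k * r k) = D₀ m * r m * C j m k) (i : Fin n) :
      (G j)ᵀ i ⬝ᵥ h = if i = k then 1 else 0 :=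
    dotProduct_eq_of_duality (Δ := fun i => D₀ i * r i) (hΔ k).ne' hh (fun i => hdual j hj i k) i
  intro f
  refine RingHom.congr_fun (eq_mul_of_mul_step_eq hM0 hT0 hQ0 hM hT hQ fun j hj => ?_) f
  have hpair' := hpair (j + 1) hj (idx (j + 1)) (-hfun (j + 1)) fun m => by
    rw [Pi.neg_apply, neg_mul, hfunint j hj m, hC j hj m, if_pos rfl]; ring
  refine (hTrop j hj.le).fockGoncharov_step (hT j hj ▸ hTrop (j + 1) hj) (hG j hj) (hGB j hj.le)
    (fun i hi => by simpa [hi] using hpair j hj.le _ _ (hfunint j hj) i)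
    (neg_eq_iff_eq_neg.mp (by simpa using hpair' (idx (j + 1))))
    (hμy j hj) (hμz j hj) (hμx j hj) (hμxk j hj) (hqy j hj) (hqz j hj) (hqx j hj)

/-- **Fock–Goncharov decomposition.** For a generalized cluster pattern
with principal coefficients, the composite mutation homomorphism decomposes as
`μ^{(K)} = q^{(K)} ∘ τ^{(K)}`. -/
theorem stmt_10 (n K : ℕ) (hn : 1 ≤ n) (r : Fin n → ℕ) (hr : ∀ i, 0 < r i)
    (B₀ : Matrix (Fin n) (Fin n) ℤ)
    (D₀ : Fin n → ℤ) (hD₀ : ∀ i, 0 < D₀ i)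
    (hskew : ∀ i j, D₀ i * (r i : ℤ) * B₀ i j = -(D₀ j * (r j : ℤ) * B₀ j i))
    (idx : ℕ → Fin n) (ε : ℕ → ℤ)
    (hε : ∀ j < K, ε (j + 1) = 1 ∨ ε (j + 1) = -1)
    (B C G : ℕ → Matrix (Fin n) (Fin n) ℤ)
    (hB0 : B 0 = B₀) (hC0 : C 0 = 1) (hG0 : G 0 = 1)
    -- at each step the c-vector is nonzero and sign-coherent with common sign ε_j
    (hcv : ∀ j < K, (∃ l, C j l (idx (j + 1)) ≠ 0) ∧
      ∀ l, 0 ≤ ε (j + 1) * C j l (idx (j + 1)))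
    (hB : ∀ j < K, ∀ (a b : Fin n),
      B (j + 1) a b =
        if a = idx (j + 1) ∨ b = idx (j + 1) then -(B j a b)
        else B j a b + (r (idx (j + 1)) : ℤ) *
          (max (-(B j a (idx (j + 1)))) 0 * B j (idx (j + 1)) b
            + B j a (idx (j + 1)) * max (B j (idx (j + 1)) b) 0))
    (hC : ∀ j < K, ∀ (a b : Fin n),
      C (j + 1) a b =
        if b = idx (j + 1) then -(C j a b)
        else C j a b + (r (idx (j + 1)) : ℤ) *
          (C j a (idx (j + 1)) * max (ε (j + 1) * B j (idx (j + 1)) b) 0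
            + max (-(ε (j + 1) * C j a (idx (j + 1)))) 0 * B j (idx (j + 1)) b))
    (hG : ∀ j < K, ∀ (l i : Fin n),
      G (j + 1) l i =
        if i = idx (j + 1) then
          -(G j l i) + (r (idx (j + 1)) : ℤ) *
            ∑ p, max (-(ε (j + 1) * B j p (idx (j + 1)))) 0 * G j l p
        else G j l i)
    -- tropical duality
    (hdual : ∀ j ≤ K, ∀ (i l : Fin n),
      ∑ m, G j m i * (D₀ m * (r m : ℤ)) * C j m l =
        if i = l then D₀ l * (r l : ℤ) else 0)
    -- the rational numbers h_{i,j} = (e_i, d_{(j)}·c_j)_{D₀R} are integers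
    (hfun : ℕ → Fin n → ℤ)
    (hfunint : ∀ j < K, ∀ i,
      hfun (j + 1) i * (D₀ (idx (j + 1)) * (r (idx (j + 1)) : ℤ)) =
        D₀ i * (r i : ℤ) * C j i (idx (j + 1)))
    (μ : ℕ → (GF n r →+* GF n r))
    (hμ0 : ∀ j < K, ∀ a : ℚ, μ (j + 1) (Qc a) = Qc a)
    (hμy : ∀ j < K, ∀ i, μ (j + 1) (Yv i) = Yv i)
    (hμz : ∀ j < K, ∀ i s, μ (j + 1) (Zv i s) = Zv i s)
    (hμx : ∀ j < K, ∀ i, i ≠ idx (j + 1) → μ (j + 1) (Xv i) = Xv i)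
    (hμxk : ∀ j < K, μ (j + 1) (Xv (idx (j + 1))) =
      (Xv (idx (j + 1)) : GF n r)⁻¹ *
        (∏ l, Xv (r := r) l ^ max (-(ε (j + 1) * B j l (idx (j + 1)))) 0) ^ (r (idx (j + 1))) *
        ∑ s ∈ Finset.range (r (idx (j + 1)) + 1),
          Zc r (idx (j + 1)) s *
            ((∏ l, Yv (r := r) l ^ C j l (idx (j + 1))) *
              ∏ l, Xv (r := r) l ^ B j l (idx (j + 1))) ^ (ε (j + 1) * s))
    (M : ℕ → (GF n r →+* GF n r))
    (hM0 : M 0 = RingHom.id _)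
    (hM : ∀ j < K, M (j + 1) = (M j).comp (μ (j + 1)))
    (τ : ℕ → (GF n r →+* GF n r))
    (hτ0 : ∀ j < K, ∀ a : ℚ, τ (j + 1) (Qc a) = Qc a)
    (hτy : ∀ j < K, ∀ i, τ (j + 1) (Yv i) = Yv i)
    (hτz : ∀ j < K, ∀ i s, τ (j + 1) (Zv i s) = Zv i s)
    (hτx : ∀ j < K, ∀ i, i ≠ idx (j + 1) → τ (j + 1) (Xv i) = Xv i)
    (hτxk : ∀ j < K, τ (j + 1) (Xv (idx (j + 1))) =
      (Xv (idx (j + 1)) : GF n r)⁻¹ *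
        ∏ l, Xv l ^ max (-(ε (j + 1) * B j l (idx (j + 1)) * (r (idx (j + 1)) : ℤ))) 0)
    (T : ℕ → (GF n r →+* GF n r))
    (hT0 : T 0 = RingHom.id _)
    (hT : ∀ j < K, T (j + 1) = (T j).comp (τ (j + 1)))
    (q : ℕ → (GF n r →+* GF n r))
    (hq0 : ∀ j < K, ∀ a : ℚ, q (j + 1) (Qc a) = Qc a)
    (hqy : ∀ j < K, ∀ i, q (j + 1) (Yv i) = Yv i)
    (hqz : ∀ j < K, ∀ i s, q (j + 1) (Zv i s) = Zv i s)
    (hqx : ∀ j < K, ∀ i, q (j + 1) (Xv i) =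
      Xv i * (∑ s ∈ Finset.range (r (idx (j + 1)) + 1),
        Zc r (idx (j + 1)) s *
          yhatpow r B₀ (fun m => ε (j + 1) * C j m (idx (j + 1))) ^ s) ^ (-(hfun (j + 1) i)))
    (Q : ℕ → (GF n r →+* GF n r))
    (hQ0 : Q 0 = RingHom.id _)
    (hQ : ∀ j < K, Q (j + 1) = (Q j).comp (q (j + 1)))
    : ∀ f, M K f = Q K (T K f) :=
  stmt_10_general n K r hr B₀ D₀ hD₀ hskew idx ε hε B C G hB0 hC0 hG0 hcv hB hC hG hdual hfun
    hfunint μ hμy hμz hμx hμxk M hM0 hM τ hτy hτz hτx hτxk T hT0 hT q hqy hqz hqx Q hQ0 hQ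
end
end
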